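/- arXiv:2407.21526 — 6 statements merged into one kernel-verified Lean document; each statement's English description precedes it below -/
import Mathlib

section
/- Let q : ℝ → ℓ²(ℤ,ℂ) be continuously differentiable as a curve in ℓ²(ℤ,ℂ) and satisfy the focusing Ablowitz–Ladik system i (d/dt) q_n(t) = q_{n+1}(t) − 2 q_n(t) + q_{n−1}(t) + |q_n(t)|²(q_{n+1}(t) + q_{n−1}(t)) for all n ∈ ℤ and t ∈ ℝ. Then the function t ↦ ∑_{n∈ℤ} log(1 + |q_n(t)|²) is constant in t; equivalently, the infinite product c_{−∞}(t) = ∏_{n∈ℤ}(1 + |q_n(t)|²) is a conserved quantity. -/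
lemma AL_key (z w1 w2 : ℂ) :
    2 * ((starRingEnd ℂ z) * (-Complex.I * (w1 - 2*z + w2 + ((‖z‖:ℂ))^2*(w1+w2)))).re
      / (1 + ‖z‖^2)
      = 2*((starRingEnd ℂ z)*w1).im + 2*((starRingEnd ℂ z)*w2).im := by
  have hz : ‖z‖^2 = z.re^2 + z.im^2 := by
    rw [Complex.sq_norm, Complex.normSq_apply]; ring
  have hpos : (0:ℝ) < 1 + ‖z‖^2 := by positivity
  rw [div_eq_iff hpos.ne']
  rw [show ((‖z‖:ℂ))^2 = ((‖z‖^2:ℝ):ℂ) by push_cast; ring]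
  simp only [Complex.mul_re, Complex.mul_im, Complex.add_re, Complex.add_im,
    Complex.sub_re, Complex.sub_im, Complex.neg_re, Complex.neg_im, Complex.I_re,
    Complex.I_im, Complex.conj_re, Complex.conj_im, Complex.ofReal_re, Complex.ofReal_im,
    Complex.re_ofNat, Complex.im_ofNat]
  rw [hz]
  ring

lemma AL_log_sq_deriv (f : ℝ → ℂ) (v : ℂ) (t : ℝ) (hf : HasDerivAt f v t) :
    HasDerivAt (fun s => Real.log (1 + ‖f s‖ ^ 2))
      (2 * ((starRingEnd ℂ (f t)) * v).re / (1 + ‖f t‖ ^ 2)) t := by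
  have hconj : HasDerivAt (fun s => (starRingEnd ℂ) (f s)) ((starRingEnd ℂ) v) t := by
    exact hf.star
  have hmul : HasDerivAt (fun s => (starRingEnd ℂ) (f s) * f s)
      ((starRingEnd ℂ) v * f t + (starRingEnd ℂ) (f t) * v) t := hconj.mul hf
  have hre : HasDerivAt (fun s => ((starRingEnd ℂ) (f s) * f s).re)
      (((starRingEnd ℂ) v * f t + (starRingEnd ℂ) (f t) * v).re) t :=
    (Complex.reCLM.hasFDerivAt.comp_hasDerivAt t hmul)
  have heq : ∀ s : ℝ, ((starRingEnd ℂ) (f s) * f s).re = ‖f s‖ ^ 2 := by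
    intro s
    rw [show (starRingEnd ℂ) (f s) * f s = ((Complex.normSq (f s) : ℝ) : ℂ) by
      rw [mul_comm, Complex.mul_conj]]
    rw [Complex.normSq_eq_norm_sq, Complex.ofReal_re]
  have hre' : HasDerivAt (fun s => ‖f s‖ ^ 2) (2 * ((starRingEnd ℂ (f t)) * v).re) t := by
    have := hre
    simp only [heq] at this
    convert this using 1
    have : (starRingEnd ℂ) v * f t = (starRingEnd ℂ) ((starRingEnd ℂ) (f t) * v) := by
      simp [mul_comm]
    rw [Complex.add_re, this, Complex.conj_re]; ring
  have hpos : (0:ℝ) < 1 + ‖f t‖ ^ 2 := by positivity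
  have := (hre'.const_add 1).log hpos.ne'
  simpa using this

lemma AL_tele (g : ℤ → ℝ) (a : ℤ) : ∀ b, a ≤ b →
    ∑ n ∈ Finset.Icc a b, (g n - g (n - 1)) = g b - g (a - 1) := by
  refine Int.le_induction ?_ ?_
  · rw [Finset.Icc_self, Finset.sum_singleton]
  · intro n hn ih
    have hins : Finset.Icc a (n + 1) = insert (n + 1) (Finset.Icc a n) := by
      ext x; simp only [Finset.mem_Icc, Finset.mem_insert]; omega
    have hnm : (n + 1) ∉ Finset.Icc a n := by simp [Finset.mem_Icc]
    rw [hins, Finset.sum_insert hnm, ih]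
    have : n + 1 - 1 = n := by ring
    rw [this]; ring

/-- Conservation of `c_{-∞} = ∏_{n∈ℤ} (1+|q_n(t)|²)` for ℓ²-solutions of the focusing
Ablowitz–Ladik system: the series `∑_{n} log(1+|q_n(t)|²)` is constant in time. -/
theorem ablowitz_ladik_conserved_quantity
    (q : ℝ → lp (fun _ : ℤ => ℂ) 2)
    (hsmooth : ContDiff ℝ 1 q)
    (hAL : ∀ (n : ℤ) (t : ℝ),
      HasDerivAt (fun s : ℝ => q s n)
        (-Complex.I * (q t (n + 1) - 2 * q t n + q t (n - 1) +
          (‖q t n‖ : ℂ) ^ 2 * (q t (n + 1) + q t (n - 1)))) t) :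
    ∀ s t : ℝ,
      (∑' n : ℤ, Real.log (1 + ‖q t n‖ ^ 2)) =
        ∑' n : ℤ, Real.log (1 + ‖q s n‖ ^ 2) := by
  intro s t
  -- the current `a n τ = 2 Im(q̄_n q_{n+1})`
  set a : ℤ → ℝ → ℝ := fun n τ => 2 * ((starRingEnd ℂ (q τ n)) * q τ (n + 1)).im with ha
  -- continuity of pointwise evaluations
  have hqc : ∀ n : ℤ, Continuous fun τ => q τ n := fun n =>
    continuous_iff_continuousAt.2 fun τ => (hAL n τ).continuousAt
  have hac : ∀ n : ℤ, Continuous (a n) := by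
    intro n
    exact (continuous_const.mul (Complex.continuous_im.comp
      (((Complex.continuous_conj.comp (hqc n)).mul (hqc (n + 1)))))).comp continuous_id
  -- per-term derivative in telescoping form
  have hterm : ∀ (n : ℤ) (τ : ℝ),
      HasDerivAt (fun u => Real.log (1 + ‖q u n‖ ^ 2)) (a n τ - a (n - 1) τ) τ := by
    intro n τ
    have h := AL_log_sq_deriv (fun u => q u n) _ τ (hAL n τ)
    rw [AL_key] at h
    have hidx : n - 1 + 1 = n := by ring
    have him : ((starRingEnd ℂ) (q τ (n - 1)) * q τ n).im
        = -(((starRingEnd ℂ) (q τ n)) * q τ (n - 1)).im := by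
      rw [show (starRingEnd ℂ) (q τ (n - 1)) * q τ n
          = (starRingEnd ℂ) ((starRingEnd ℂ) (q τ n) * q τ (n - 1)) by
        rw [map_mul, Complex.conj_conj, mul_comm], Complex.conj_im]
    have : a n τ - a (n - 1) τ
        = 2*((starRingEnd ℂ (q τ n)) * q τ (n+1)).im + 2*((starRingEnd ℂ (q τ n)) * q τ (n-1)).im := by
      simp only [ha, hidx, him]; ring
    rw [this]
    exact h
  -- derivative of partial sums
  have hFN : ∀ (N : ℕ) (τ : ℝ),
      HasDerivAt (fun u => ∑ n ∈ Finset.Icc (-(N:ℤ)) N, Real.log (1 + ‖q u n‖ ^ 2))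
        (a N τ - a (-(N:ℤ) - 1) τ) τ := by
    intro N τ
    have h := HasDerivAt.fun_sum (fun n (_ : n ∈ Finset.Icc (-(N:ℤ)) N) => hterm n τ)
    rwa [AL_tele (fun n => a n τ) (-(N:ℤ)) N (by exact_mod_cast neg_nonpos.2 (Int.ofNat_nonneg N) |>.trans (Int.ofNat_nonneg N))] at h
  -- FTC
  have hInt : ∀ N : ℕ,
      (∫ τ in s..t, (a N τ - a (-(N:ℤ) - 1) τ))
        = (∑ n ∈ Finset.Icc (-(N:ℤ)) N, Real.log (1 + ‖q t n‖ ^ 2))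
          - (∑ n ∈ Finset.Icc (-(N:ℤ)) N, Real.log (1 + ‖q s n‖ ^ 2)) := by
    intro N
    exact intervalIntegral.integral_eq_sub_of_hasDerivAt (fun τ _ => hFN N τ)
      (((hac N).sub (hac (-(N:ℤ) - 1))).intervalIntegrable s t)
  -- summability facts
  have hs2 : ∀ τ : ℝ, Summable fun n : ℤ => ‖q τ n‖ ^ 2 := by
    intro τ
    have htr : (2:ENNReal).toReal = ((2:ℕ):ℝ) := by simp
    have h := (lp.memℓp (q τ)).summable (by rw [htr]; norm_num)
    refine h.congr fun n => ?_
    rw [htr, Real.rpow_natCast]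
  have hsummable : ∀ τ : ℝ, Summable fun n : ℤ => Real.log (1 + ‖q τ n‖ ^ 2) := by
    intro τ
    refine Summable.of_nonneg_of_le (fun n => Real.log_nonneg (by nlinarith [sq_nonneg ‖q τ n‖]))
      (fun n => ?_) (hs2 τ)
    have := Real.log_le_sub_one_of_pos (show (0:ℝ) < 1 + ‖q τ n‖ ^ 2 by positivity)
    linarith
  -- convergence of symmetric partial sums to the tsum
  have htends : ∀ τ : ℝ,
      Filter.Tendsto (fun N : ℕ => ∑ n ∈ Finset.Icc (-(N:ℤ)) N, Real.log (1 + ‖q τ n‖ ^ 2))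
        Filter.atTop (nhds (∑' n : ℤ, Real.log (1 + ‖q τ n‖ ^ 2))) := by
    intro τ
    have hmono : Monotone fun N : ℕ => Finset.Icc (-(N:ℤ)) (N:ℤ) := by
      intro m n hmn
      apply Finset.Icc_subset_Icc <;> omega
    have hexh : ∀ i : ℤ, ∃ N : ℕ, i ∈ Finset.Icc (-(N:ℤ)) (N:ℤ) := by
      intro i
      refine ⟨i.natAbs, ?_⟩
      rw [Finset.mem_Icc]
      omega
    exact (hsummable τ).hasSum.comp (Filter.tendsto_atTop_finset_of_monotone hmono hexh)
  -- integrals tend to 0 by dominated convergence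
  have hbdd : ∀ (n : ℤ) (τ : ℝ), |a n τ| ≤ ‖q τ n‖ ^ 2 + ‖q τ (n + 1)‖ ^ 2 := by
    intro n τ
    have h1 : |((starRingEnd ℂ (q τ n)) * q τ (n + 1)).im| ≤ ‖q τ n‖ * ‖q τ (n + 1)‖ := by
      calc |((starRingEnd ℂ (q τ n)) * q τ (n + 1)).im|
          ≤ ‖(starRingEnd ℂ (q τ n)) * q τ (n + 1)‖ := Complex.abs_im_le_norm _
        _ = ‖q τ n‖ * ‖q τ (n + 1)‖ := by rw [norm_mul, RCLike.norm_conj]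
    have h2 : 2 * (‖q τ n‖ * ‖q τ (n + 1)‖) ≤ ‖q τ n‖ ^ 2 + ‖q τ (n + 1)‖ ^ 2 := by
      nlinarith [sq_nonneg (‖q τ n‖ - ‖q τ (n + 1)‖)]
    calc |a n τ| = 2 * |((starRingEnd ℂ (q τ n)) * q τ (n + 1)).im| := by
          rw [ha]; simp [abs_mul]
      _ ≤ 2 * (‖q τ n‖ * ‖q τ (n + 1)‖) := by linarith
      _ ≤ _ := h2
  have hnb : ∀ (n : ℤ) (τ : ℝ), ‖q τ n‖ ≤ ‖q τ‖ :=
    fun n τ => lp.norm_apply_le_norm (by norm_num) (q τ) n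
  have hIto0 : Filter.Tendsto
      (fun N : ℕ => ∫ τ in s..t, (a N τ - a (-(N:ℤ) - 1) τ)) Filter.atTop (nhds 0) := by
    have h0 : (0:ℝ) = ∫ τ in s..t, (0:ℝ) := by simp
    rw [h0]
    apply intervalIntegral.tendsto_integral_filter_of_dominated_convergence
      (bound := fun τ => 4 * ‖q τ‖ ^ 2)
    · exact Filter.Eventually.of_forall fun N =>
        (((hac N).sub (hac (-(N:ℤ) - 1)))).aestronglyMeasurable
    · refine Filter.Eventually.of_forall fun N => Filter.Eventually.of_forall fun τ _ => ?_
      have b1 := hbdd N τ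
      have b2 := hbdd (-(N:ℤ) - 1) τ
      have c1 := hnb (N:ℤ) τ; have c2 := hnb ((N:ℤ)+1) τ
      have c3 := hnb (-(N:ℤ) - 1) τ; have c4 := hnb (-(N:ℤ) - 1 + 1) τ
      have hn0 : (0:ℝ) ≤ ‖q τ‖ := norm_nonneg _
      have d1 : ‖q τ (N:ℤ)‖^2 ≤ ‖q τ‖^2 := pow_le_pow_left₀ (norm_nonneg _) c1 2
      have d2 : ‖q τ ((N:ℤ)+1)‖^2 ≤ ‖q τ‖^2 := pow_le_pow_left₀ (norm_nonneg _) c2 2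
      have d3 : ‖q τ (-(N:ℤ)-1)‖^2 ≤ ‖q τ‖^2 := pow_le_pow_left₀ (norm_nonneg _) c3 2
      have d4 : ‖q τ (-(N:ℤ)-1+1)‖^2 ≤ ‖q τ‖^2 := pow_le_pow_left₀ (norm_nonneg _) c4 2
      calc ‖a N τ - a (-(N:ℤ) - 1) τ‖ ≤ |a N τ| + |a (-(N:ℤ) - 1) τ| := by
            rw [Real.norm_eq_abs]; exact abs_sub _ _
        _ ≤ 4 * ‖q τ‖ ^ 2 := by linarith
    · exact ((continuous_const.mul
        ((hsmooth.continuous.norm).pow 2)).intervalIntegrable s t)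
    · refine Filter.Eventually.of_forall fun τ _ => ?_
      have hsum := hs2 τ
      have key : ∀ e : ℕ → ℤ, Function.Injective e →
          Filter.Tendsto (fun N => ‖q τ (e N)‖ ^ 2) Filter.atTop (nhds 0) :=
        fun e he => (hsum.comp_injective he).tendsto_atTop_zero
      have t1 := key (fun N => (N:ℤ)) (fun x y h => by
        have h' : (x:ℤ) = y := h; omega)
      have t2 := key (fun N => (N:ℤ) + 1) (fun x y h => by
        have h' : (x:ℤ) + 1 = (y:ℤ) + 1 := h; omega)
      have t3 := key (fun N => -(N:ℤ) - 1) (fun x y h => by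
        have h' : -(x:ℤ) - 1 = -(y:ℤ) - 1 := h; omega)
      have t4 := key (fun N => -(N:ℤ)) (fun x y h => by
        have h' : -(x:ℤ) = -(y:ℤ) := h; omega)
      have hg : Filter.Tendsto (fun N : ℕ =>
          (‖q τ (N:ℤ)‖^2 + ‖q τ ((N:ℤ)+1)‖^2) + (‖q τ (-(N:ℤ)-1)‖^2 + ‖q τ (-(N:ℤ)-1+1)‖^2))
          Filter.atTop (nhds 0) := by
        have : Filter.Tendsto (fun N : ℕ => ‖q τ (-(N:ℤ)-1+1)‖ ^ 2) Filter.atTop (nhds 0) := by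
          refine t4.congr fun N => ?_
          simp only []
          rw [show -(N:ℤ) - 1 + 1 = -(N:ℤ) from by ring]
        simpa using (t1.add t2).add (t3.add this)
      refine squeeze_zero_norm (fun N => ?_) hg
      calc ‖a N τ - a (-(N:ℤ) - 1) τ‖ ≤ |a N τ| + |a (-(N:ℤ) - 1) τ| := by
            rw [Real.norm_eq_abs]; exact abs_sub _ _
        _ ≤ _ := add_le_add (hbdd N τ) (hbdd (-(N:ℤ) - 1) τ)
  -- combine
  have hdiff : Filter.Tendsto
      (fun N : ℕ => (∑ n ∈ Finset.Icc (-(N:ℤ)) N, Real.log (1 + ‖q t n‖ ^ 2))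
        - (∑ n ∈ Finset.Icc (-(N:ℤ)) N, Real.log (1 + ‖q s n‖ ^ 2)))
      Filter.atTop
      (nhds ((∑' n : ℤ, Real.log (1 + ‖q t n‖ ^ 2)) - ∑' n : ℤ, Real.log (1 + ‖q s n‖ ^ 2))) :=
    (htends t).sub (htends s)
  have hIto0' : Filter.Tendsto
      (fun N : ℕ => (∑ n ∈ Finset.Icc (-(N:ℤ)) N, Real.log (1 + ‖q t n‖ ^ 2))
        - (∑ n ∈ Finset.Icc (-(N:ℤ)) N, Real.log (1 + ‖q s n‖ ^ 2)))
      Filter.atTop (nhds 0) := by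
    refine hIto0.congr fun N => hInt N
  have := tendsto_nhds_unique hdiff hIto0'
  linarith [this]
end

section
/- Let K > 0, T > 0, and let q : [0,T] → ℓ^{2,1}(ℤ,ℂ) be continuous, with each component q_n(t) differentiable in t, satisfy the focusing Ablowitz–Ladik system i (d/dt) q_n = q_{n+1} − 2q_n + q_{n−1} + |q_n|²(q_{n+1} + q_{n−1}), and suppose sup_{t∈[0,T]} ‖q(t)‖_{ℓ^∞} ≤ K. Then there exists a constant C > 0 depending only on K such that ‖q(t)‖_{2,1} ≤ ‖q(0)‖_{2,1}·e^{C t} for all t ∈ [0,T]. In particular the ℓ^{2,1}-norm of the solution does not blow up in finite time. -/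
open scoped ENNReal


/-- The ℓ^{2,1} norm of a sequence. -/
noncomputable def norm21 (a : ℤ → ℂ) : ℝ :=
  Real.sqrt (∑' n : ℤ, (1 + (n : ℝ) ^ 2) * ‖a n‖ ^ 2)

private lemma wt_pos (n : ℤ) : 0 < 1 + (n : ℝ) ^ 2 := by positivity

private lemma wt_le_succ (n : ℤ) : 1 + (n : ℝ) ^ 2 ≤ 3 * (1 + ((n + 1 : ℤ) : ℝ) ^ 2) := by
  push_cast
  nlinarith [sq_nonneg (2 * (n : ℝ) + 3)]

private lemma wt_le_pred (n : ℤ) : 1 + (n : ℝ) ^ 2 ≤ 3 * (1 + ((n - 1 : ℤ) : ℝ) ^ 2) := by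
  push_cast
  nlinarith [sq_nonneg (2 * (n : ℝ) - 3)]

private lemma hasDerivWithinAt_norm_sq {f : ℝ → ℂ} {v : ℂ} {s : Set ℝ} {t : ℝ}
    (hf : HasDerivWithinAt f v s t) :
    HasDerivWithinAt (fun u => ‖f u‖ ^ 2)
      (2 * ((f t).re * v.re + (f t).im * v.im)) s t := by
  have hre : HasDerivWithinAt (fun u => (f u).re) v.re s t := by
    exact Complex.reCLM.hasFDerivAt.comp_hasDerivWithinAt t hf
  have him : HasDerivWithinAt (fun u => (f u).im) v.im s t := by
    exact Complex.imCLM.hasFDerivAt.comp_hasDerivWithinAt t hf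
  have h := (hre.mul hre).add (him.mul him)
  have heq : (fun u => ‖f u‖ ^ 2)
      = fun u => (f u).re * (f u).re + (f u).im * (f u).im := by
    funext u
    rw [Complex.sq_norm, Complex.normSq_apply]
  rw [heq]
  exact h.congr_deriv (by ring)

private lemma two_re_im_le (z v : ℂ) :
    2 * (z.re * v.re + z.im * v.im) ≤ 2 * (‖z‖ * ‖v‖) := by
  have h : z.re * v.re + z.im * v.im = ((starRingEnd ℂ) z * v).re := by
    simp only [Complex.mul_re, Complex.conj_re, Complex.conj_im]
    ring
  have h2 : ((starRingEnd ℂ) z * v).re ≤ ‖z‖ * ‖v‖ := by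
    calc ((starRingEnd ℂ) z * v).re ≤ ‖(starRingEnd ℂ) z * v‖ :=
          Complex.re_le_norm _
      _ = ‖z‖ * ‖v‖ := by
          rw [norm_mul, Complex.norm_conj]
  linarith [h ▸ h2]

private lemma memℓp_weight {a : ℤ → ℂ}
    (h : Summable fun n : ℤ => (1 + (n : ℝ) ^ 2) * ‖a n‖ ^ 2) :
    Memℓp (fun n : ℤ => (Real.sqrt (1 + (n : ℝ) ^ 2) : ℂ) * a n) 2 := by
  apply memℓp_gen
  have key : ∀ n : ℤ, ‖(Real.sqrt (1 + (n : ℝ) ^ 2) : ℂ) * a n‖ ^ (2 : ℝ≥0∞).toReal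
      = (1 + (n : ℝ) ^ 2) * ‖a n‖ ^ 2 := by
    intro n
    have h2 : ((2 : ℝ≥0∞)).toReal = ((2 : ℕ) : ℝ) := by norm_num
    rw [h2, Real.rpow_natCast, norm_mul, Complex.norm_real, Real.norm_eq_abs,
      abs_of_nonneg (Real.sqrt_nonneg _), mul_pow, Real.sq_sqrt (by positivity)]
  simpa only [key] using h

private lemma norm21_eq_lp {a : ℤ → ℂ}
    (h : Summable fun n : ℤ => (1 + (n : ℝ) ^ 2) * ‖a n‖ ^ 2) :
    norm21 a = ‖(⟨fun n : ℤ => (Real.sqrt (1 + (n : ℝ) ^ 2) : ℂ) * a n, memℓp_weight h⟩ :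
      lp (fun _ : ℤ => ℂ) 2)‖ := by
  rw [lp.norm_eq_tsum_rpow (by norm_num) _]
  have key : ∀ n : ℤ, ‖(Real.sqrt (1 + (n : ℝ) ^ 2) : ℂ) * a n‖ ^ (2 : ℝ≥0∞).toReal
      = (1 + (n : ℝ) ^ 2) * ‖a n‖ ^ 2 := by
    intro n
    have h2 : ((2 : ℝ≥0∞)).toReal = ((2 : ℕ) : ℝ) := by norm_num
    rw [h2, Real.rpow_natCast, norm_mul, Complex.norm_real, Real.norm_eq_abs,
      abs_of_nonneg (Real.sqrt_nonneg _), mul_pow, Real.sq_sqrt (by positivity)]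
  have h2 : (1 : ℝ) / (2 : ℝ≥0∞).toReal = 1 / 2 := by norm_num
  rw [norm21, Real.sqrt_eq_rpow, h2]
  congr 1
  exact (tsum_congr key).symm

private lemma summable_wdiff {a b : ℤ → ℂ}
    (ha : Summable fun n : ℤ => (1 + (n : ℝ) ^ 2) * ‖a n‖ ^ 2)
    (hb : Summable fun n : ℤ => (1 + (n : ℝ) ^ 2) * ‖b n‖ ^ 2) :
    Summable fun n : ℤ => (1 + (n : ℝ) ^ 2) * ‖a n - b n‖ ^ 2 := by
  apply Summable.of_nonneg_of_le (fun n => by positivity) (fun n => ?_)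
    ((ha.mul_left 2).add (hb.mul_left 2))
  have h1 : ‖a n - b n‖ ≤ ‖a n‖ + ‖b n‖ := norm_sub_le _ _
  have h2 : ‖a n - b n‖ ^ 2 ≤ 2 * ‖a n‖ ^ 2 + 2 * ‖b n‖ ^ 2 := by
    nlinarith [norm_nonneg (a n - b n), norm_nonneg (a n), norm_nonneg (b n),
      sq_nonneg (‖a n‖ - ‖b n‖)]
  calc (1 + (n : ℝ) ^ 2) * ‖a n - b n‖ ^ 2
      ≤ (1 + (n : ℝ) ^ 2) * (2 * ‖a n‖ ^ 2 + 2 * ‖b n‖ ^ 2) :=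
        mul_le_mul_of_nonneg_left h2 (wt_pos n).le
    _ = 2 * ((1 + (n : ℝ) ^ 2) * ‖a n‖ ^ 2) + 2 * ((1 + (n : ℝ) ^ 2) * ‖b n‖ ^ 2) := by ring

private lemma norm21_sub_le (a b : ℤ → ℂ)
    (ha : Summable fun n : ℤ => (1 + (n : ℝ) ^ 2) * ‖a n‖ ^ 2)
    (hb : Summable fun n : ℤ => (1 + (n : ℝ) ^ 2) * ‖b n‖ ^ 2) :
    norm21 a - norm21 b ≤ norm21 (fun n => a n - b n) := by
  haveI : Fact ((1 : ℝ≥0∞) ≤ 2) := ⟨by norm_num⟩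
  have hd : Summable fun n : ℤ => (1 + (n : ℝ) ^ 2) * ‖(fun m => a m - b m) n‖ ^ 2 :=
    summable_wdiff ha hb
  rw [norm21_eq_lp ha, norm21_eq_lp hb, norm21_eq_lp hd]
  set A : lp (fun _ : ℤ => ℂ) 2 :=
    ⟨fun n : ℤ => (Real.sqrt (1 + (n : ℝ) ^ 2) : ℂ) * a n, memℓp_weight ha⟩ with hA
  set B : lp (fun _ : ℤ => ℂ) 2 :=
    ⟨fun n : ℤ => (Real.sqrt (1 + (n : ℝ) ^ 2) : ℂ) * b n, memℓp_weight hb⟩ with hB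
  have hABeq : (⟨fun n : ℤ => (Real.sqrt (1 + (n : ℝ) ^ 2) : ℂ) * ((fun m => a m - b m) n),
      memℓp_weight hd⟩ : lp (fun _ : ℤ => ℂ) 2) = A - B := by
    apply Subtype.ext
    have := lp.coeFn_sub A B
    funext n
    have hsub : (A - B : lp (fun _ : ℤ => ℂ) 2) n = A n - B n := by
      rw [this]; rfl
    show (Real.sqrt (1 + (n : ℝ) ^ 2) : ℂ) * (a n - b n) = _
    rw [hsub]
    show _ = (Real.sqrt (1 + (n : ℝ) ^ 2) : ℂ) * a n - (Real.sqrt (1 + (n : ℝ) ^ 2) : ℂ) * b n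
    ring
  rw [hABeq]
  exact norm_sub_norm_le A B

private lemma key_cross {W Wp A B : ℝ} (hW : 0 < W) (hw3 : W ≤ 3 * Wp) :
    W * (A * B) ≤ (3 / 2) * (W * A ^ 2) + (3 / 2) * (Wp * B ^ 2) := by
  nlinarith [mul_nonneg hW.le (sq_nonneg (A - B)),
    mul_le_mul_of_nonneg_right hw3 (sq_nonneg B),
    mul_nonneg hW.le (sq_nonneg A)]

/-- Gronwall-type bound: a solution of the focusing Ablowitz–Ladik system on `[0,T]`
that stays in ℓ^{2,1}, depends continuously on `t` in the ℓ^{2,1} metric, and is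
uniformly bounded by `K` in ℓ^∞ satisfies `‖q(t)‖_{2,1} ≤ ‖q(0)‖_{2,1} e^{Ct}` for a
constant `C > 0` depending only on `K`; in particular the ℓ^{2,1}-norm does not blow up. -/
theorem ablowitz_ladik_no_blowup
    (K : ℝ) (hK : 0 < K) :
    ∃ C : ℝ, 0 < C ∧
      ∀ (T : ℝ), 0 < T →
      ∀ q : ℝ → ℤ → ℂ,
        -- q(t) ∈ ℓ^{2,1} on [0,T]
        (∀ t ∈ Set.Icc (0 : ℝ) T,
          Summable fun n : ℤ => (1 + (n : ℝ) ^ 2) * ‖q t n‖ ^ 2) →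
        -- continuity of t ↦ q(t) into ℓ^{2,1}
        (∀ t ∈ Set.Icc (0 : ℝ) T, ∀ ε > (0 : ℝ), ∃ δ > (0 : ℝ),
          ∀ s ∈ Set.Icc (0 : ℝ) T, |s - t| < δ →
            norm21 (fun n => q s n - q t n) < ε) →
        -- each component is differentiable and satisfies the focusing Ablowitz–Ladik system
        (∀ (n : ℤ), ∀ t ∈ Set.Icc (0 : ℝ) T,
          HasDerivWithinAt (fun s : ℝ => q s n)
            (-Complex.I * (q t (n + 1) - 2 * q t n + q t (n - 1) +
              (‖q t n‖ : ℂ) ^ 2 * (q t (n + 1) + q t (n - 1))))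
            (Set.Icc (0 : ℝ) T) t) →
        -- uniform ℓ^∞ bound
        (∀ t ∈ Set.Icc (0 : ℝ) T, ∀ n : ℤ, ‖q t n‖ ≤ K) →
        ∀ t ∈ Set.Icc (0 : ℝ) T,
          norm21 (q t) ≤ norm21 (q 0) * Real.exp (C * t) := by
  refine ⟨8 * (1 + K ^ 2), by positivity, ?_⟩
  intro T hT q hSum hCont hDeriv hBdd
  set C : ℝ := 8 * (1 + K ^ 2) with hCdef
  set C' : ℝ := 16 * (1 + K ^ 2) with hC'def
  have hCpos : 0 < C := by positivity
  have hC'pos : 0 < C' := by positivity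
  set w : ℤ → ℝ := fun n => 1 + (n : ℝ) ^ 2 with hwdef
  set F : ℝ → ℝ := fun t => ∑' n : ℤ, w n * ‖q t n‖ ^ 2 with hFdef
  set v : ℝ → ℤ → ℂ := fun t n =>
    -Complex.I * (q t (n + 1) - 2 * q t n + q t (n - 1) +
      (‖q t n‖ : ℂ) ^ 2 * (q t (n + 1) + q t (n - 1))) with hvdef
  set e : ℝ → ℤ → ℝ := fun t n =>
    w n * (2 * ((q t n).re * (v t n).re + (q t n).im * (v t n).im)) with hedef
  have hFnonneg : ∀ t : ℝ, 0 ≤ F t := fun t => tsum_nonneg fun n => by positivity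
  have hn21 : ∀ t : ℝ, norm21 (q t) = Real.sqrt (F t) := fun t => rfl
  -- pointwise bound on e
  have hterm : ∀ s ∈ Set.Icc (0 : ℝ) T, ∀ n : ℤ,
      e s n ≤ (6 * (1 + K ^ 2) + 4) * (w n * ‖q s n‖ ^ 2)
        + 3 * (1 + K ^ 2) * (w (n + 1) * ‖q s (n + 1)‖ ^ 2)
        + 3 * (1 + K ^ 2) * (w (n - 1) * ‖q s (n - 1)‖ ^ 2) := by
    intro s hs n
    have hwpos : ∀ m : ℤ, 0 < w m := fun m => wt_pos m
    have hA : ‖q s n‖ ≤ K := hBdd s hs n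
    have hc : ‖((‖q s n‖ : ℝ) : ℂ) ^ 2‖ ≤ K ^ 2 := by
      rw [norm_pow, Complex.norm_real, Real.norm_eq_abs, abs_of_nonneg (norm_nonneg _)]
      exact pow_le_pow_left₀ (norm_nonneg _) hA 2
    have t1 : ‖q s (n + 1) - 2 * q s n + q s (n - 1)‖
        ≤ ‖q s (n + 1)‖ + 2 * ‖q s n‖ + ‖q s (n - 1)‖ := by
      calc ‖q s (n + 1) - 2 * q s n + q s (n - 1)‖
          ≤ ‖q s (n + 1) - 2 * q s n‖ + ‖q s (n - 1)‖ := norm_add_le _ _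
        _ ≤ (‖q s (n + 1)‖ + ‖(2 : ℂ) * q s n‖) + ‖q s (n - 1)‖ :=
            add_le_add (norm_sub_le _ _) le_rfl
        _ = ‖q s (n + 1)‖ + 2 * ‖q s n‖ + ‖q s (n - 1)‖ := by
            rw [norm_mul]; norm_num
    have t2 : ‖((‖q s n‖ : ℝ) : ℂ) ^ 2 * (q s (n + 1) + q s (n - 1))‖
        ≤ K ^ 2 * (‖q s (n + 1)‖ + ‖q s (n - 1)‖) := by
      rw [norm_mul]
      exact mul_le_mul hc (norm_add_le _ _) (norm_nonneg _) (by positivity)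
    have hVnorm : ‖v s n‖ ≤ (1 + K ^ 2) * (‖q s (n + 1)‖ + ‖q s (n - 1)‖) + 2 * ‖q s n‖ := by
      have hveq : ‖v s n‖ = ‖q s (n + 1) - 2 * q s n + q s (n - 1) +
          ((‖q s n‖ : ℝ) : ℂ) ^ 2 * (q s (n + 1) + q s (n - 1))‖ := by
        rw [hvdef]
        rw [norm_mul, norm_neg, Complex.norm_I, one_mul]
      rw [hveq]
      calc ‖q s (n + 1) - 2 * q s n + q s (n - 1) +
            ((‖q s n‖ : ℝ) : ℂ) ^ 2 * (q s (n + 1) + q s (n - 1))‖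
          ≤ ‖q s (n + 1) - 2 * q s n + q s (n - 1)‖ +
            ‖((‖q s n‖ : ℝ) : ℂ) ^ 2 * (q s (n + 1) + q s (n - 1))‖ := norm_add_le _ _
        _ ≤ (‖q s (n + 1)‖ + 2 * ‖q s n‖ + ‖q s (n - 1)‖) +
            K ^ 2 * (‖q s (n + 1)‖ + ‖q s (n - 1)‖) := add_le_add t1 t2
        _ = (1 + K ^ 2) * (‖q s (n + 1)‖ + ‖q s (n - 1)‖) + 2 * ‖q s n‖ := by ring
    have key1 : w n * (‖q s n‖ * ‖q s (n + 1)‖)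
        ≤ (3 / 2) * (w n * ‖q s n‖ ^ 2) + (3 / 2) * (w (n + 1) * ‖q s (n + 1)‖ ^ 2) :=
      key_cross (hwpos n) (wt_le_succ n)
    have key2 : w n * (‖q s n‖ * ‖q s (n - 1)‖)
        ≤ (3 / 2) * (w n * ‖q s n‖ ^ 2) + (3 / 2) * (w (n - 1) * ‖q s (n - 1)‖ ^ 2) :=
      key_cross (hwpos n) (wt_le_pred n)
    have step1 : e s n ≤ w n * (2 * (‖q s n‖ * ‖v s n‖)) := by
      rw [hedef]
      exact mul_le_mul_of_nonneg_left (two_re_im_le (q s n) (v s n)) (hwpos n).le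
    have step2 : w n * (2 * (‖q s n‖ * ‖v s n‖))
        ≤ w n * (2 * (‖q s n‖ * ((1 + K ^ 2) * (‖q s (n + 1)‖ + ‖q s (n - 1)‖)
            + 2 * ‖q s n‖))) := by
      apply mul_le_mul_of_nonneg_left _ (hwpos n).le
      apply mul_le_mul_of_nonneg_left _ (by norm_num : (0 : ℝ) ≤ 2)
      exact mul_le_mul_of_nonneg_left hVnorm (norm_nonneg _)
    have step3 : w n * (2 * (‖q s n‖ * ((1 + K ^ 2) * (‖q s (n + 1)‖ + ‖q s (n - 1)‖)
            + 2 * ‖q s n‖)))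
        = 2 * (1 + K ^ 2) * (w n * (‖q s n‖ * ‖q s (n + 1)‖))
          + 2 * (1 + K ^ 2) * (w n * (‖q s n‖ * ‖q s (n - 1)‖))
          + 4 * (w n * ‖q s n‖ ^ 2) := by ring
    have hKpos : (0 : ℝ) ≤ 2 * (1 + K ^ 2) := by positivity
    have step4 := mul_le_mul_of_nonneg_left key1 hKpos
    have step5 := mul_le_mul_of_nonneg_left key2 hKpos
    calc e s n ≤ w n * (2 * (‖q s n‖ * ‖v s n‖)) := step1
      _ ≤ _ := step2
      _ = _ := step3
      _ ≤ 2 * (1 + K ^ 2) * ((3 / 2) * (w n * ‖q s n‖ ^ 2)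
              + (3 / 2) * (w (n + 1) * ‖q s (n + 1)‖ ^ 2))
          + 2 * (1 + K ^ 2) * ((3 / 2) * (w n * ‖q s n‖ ^ 2)
              + (3 / 2) * (w (n - 1) * ‖q s (n - 1)‖ ^ 2))
          + 4 * (w n * ‖q s n‖ ^ 2) :=
            add_le_add (add_le_add step4 step5) le_rfl
      _ = (6 * (1 + K ^ 2) + 4) * (w n * ‖q s n‖ ^ 2)
          + 3 * (1 + K ^ 2) * (w (n + 1) * ‖q s (n + 1)‖ ^ 2)
          + 3 * (1 + K ^ 2) * (w (n - 1) * ‖q s (n - 1)‖ ^ 2) := by ring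
  -- bound on finite sums of e
  have hDSbound : ∀ s ∈ Set.Icc (0 : ℝ) T, ∀ S : Finset ℤ,
      (∑ n ∈ S, e s n) ≤ C' * F s := by
    intro s hs S
    have hsum := hSum s hs
    have hsum' : Summable fun n : ℤ => w n * ‖q s n‖ ^ 2 := hsum
    have h1 : ∑ n ∈ S, e s n ≤ ∑ n ∈ S,
        ((6 * (1 + K ^ 2) + 4) * (w n * ‖q s n‖ ^ 2)
          + 3 * (1 + K ^ 2) * (w (n + 1) * ‖q s (n + 1)‖ ^ 2)
          + 3 * (1 + K ^ 2) * (w (n - 1) * ‖q s (n - 1)‖ ^ 2)) :=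
      Finset.sum_le_sum fun n _ => hterm s hs n
    have hw0 : ∀ m : ℤ, ∀ x : ℝ, (0 : ℝ) ≤ w m * x ^ 2 := by
      intro m x
      have : (0 : ℝ) < w m := wt_pos m
      positivity
    have h2 : ∑ n ∈ S, w n * ‖q s n‖ ^ 2 ≤ F s :=
      Summable.sum_le_tsum S (fun n _ => hw0 n _) hsum'
    have h3 : ∑ n ∈ S, w (n + 1) * ‖q s (n + 1)‖ ^ 2 ≤ F s := by
      have himg : ∑ m ∈ S.image (· + 1 : ℤ → ℤ), w m * ‖q s m‖ ^ 2
          = ∑ n ∈ S, w (n + 1) * ‖q s (n + 1)‖ ^ 2 :=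
        Finset.sum_image fun x _ y _ h => by omega
      rw [← himg]
      exact Summable.sum_le_tsum _ (fun n _ => hw0 n _) hsum'
    have h4 : ∑ n ∈ S, w (n - 1) * ‖q s (n - 1)‖ ^ 2 ≤ F s := by
      have himg : ∑ m ∈ S.image (· - 1 : ℤ → ℤ), w m * ‖q s m‖ ^ 2
          = ∑ n ∈ S, w (n - 1) * ‖q s (n - 1)‖ ^ 2 :=
        Finset.sum_image fun x _ y _ h => by omega
      rw [← himg]
      exact Summable.sum_le_tsum _ (fun n _ => hw0 n _) hsum'
    have hc1 : (0 : ℝ) ≤ 6 * (1 + K ^ 2) + 4 := by positivity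
    have hc2 : (0 : ℝ) ≤ 3 * (1 + K ^ 2) := by positivity
    calc ∑ n ∈ S, e s n
        ≤ ∑ n ∈ S, ((6 * (1 + K ^ 2) + 4) * (w n * ‖q s n‖ ^ 2)
          + 3 * (1 + K ^ 2) * (w (n + 1) * ‖q s (n + 1)‖ ^ 2)
          + 3 * (1 + K ^ 2) * (w (n - 1) * ‖q s (n - 1)‖ ^ 2)) := h1
      _ = (6 * (1 + K ^ 2) + 4) * (∑ n ∈ S, w n * ‖q s n‖ ^ 2)
          + 3 * (1 + K ^ 2) * (∑ n ∈ S, w (n + 1) * ‖q s (n + 1)‖ ^ 2)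
          + 3 * (1 + K ^ 2) * (∑ n ∈ S, w (n - 1) * ‖q s (n - 1)‖ ^ 2) := by
            rw [Finset.sum_add_distrib, Finset.sum_add_distrib,
              ← Finset.mul_sum, ← Finset.mul_sum, ← Finset.mul_sum]
      _ ≤ (6 * (1 + K ^ 2) + 4) * F s + 3 * (1 + K ^ 2) * F s + 3 * (1 + K ^ 2) * F s :=
            add_le_add (add_le_add (mul_le_mul_of_nonneg_left h2 hc1)
              (mul_le_mul_of_nonneg_left h3 hc2)) (mul_le_mul_of_nonneg_left h4 hc2)
      _ ≤ C' * F s := by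
            rw [hC'def]
            nlinarith [mul_nonneg (sq_nonneg K) (hFnonneg s)]
  -- derivative of partial sums
  have hSderiv : ∀ S : Finset ℤ, ∀ s ∈ Set.Icc (0 : ℝ) T,
      HasDerivWithinAt (fun u => ∑ n ∈ S, w n * ‖q u n‖ ^ 2) (∑ n ∈ S, e s n)
        (Set.Icc (0 : ℝ) T) s := by
    intro S s hs
    apply HasDerivWithinAt.fun_sum
    intro n _
    exact (hasDerivWithinAt_norm_sq (hDeriv n s hs)).const_mul (w n)
  -- continuity of F
  have hFcont : ContinuousOn F (Set.Icc 0 T) := by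
    intro t ht
    rw [Metric.continuousWithinAt_iff]
    intro ε hε
    set N : ℝ := norm21 (q t) with hNdef
    have hN0 : 0 ≤ N := Real.sqrt_nonneg _
    set ε₁ : ℝ := min 1 (ε / (2 * N + 2)) with hε₁def
    have hε₁pos : 0 < ε₁ := lt_min one_pos (by positivity)
    obtain ⟨δ, hδpos, hδ⟩ := hCont t ht ε₁ hε₁pos
    refine ⟨δ, hδpos, ?_⟩
    intro s hsI hdist
    rw [Real.dist_eq] at hdist ⊢
    have hd := hδ s hsI hdist
    have hsums := hSum s hsI
    have hsumt := hSum t ht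
    set d : ℝ := norm21 fun n => q s n - q t n with hddef
    have hd0 : 0 ≤ d := Real.sqrt_nonneg _
    set ns : ℝ := norm21 (q s) with hnsdef
    have hns0 : 0 ≤ ns := Real.sqrt_nonneg _
    have h1 : ns - N ≤ d := norm21_sub_le _ _ hsums hsumt
    have h2 : N - ns ≤ d := by
      have h := norm21_sub_le (q t) (q s) hsumt hsums
      have heq : norm21 (fun n => q t n - q s n) = d := by
        rw [hddef, norm21, norm21]
        congr 1
        exact tsum_congr fun n => by rw [norm_sub_rev]
      rw [heq] at h
      exact h
    have hFs : F s = ns ^ 2 := by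
      rw [hnsdef, hn21 s, Real.sq_sqrt (hFnonneg s)]
    have hFt : F t = N ^ 2 := by
      rw [hNdef, hn21 t, Real.sq_sqrt (hFnonneg t)]
    have hnsN : |ns - N| ≤ d := abs_sub_le_iff.mpr ⟨h1, h2⟩
    have habs : |F s - F t| = |ns - N| * (ns + N) := by
      rw [hFs, hFt, show ns ^ 2 - N ^ 2 = (ns - N) * (ns + N) by ring, abs_mul,
        abs_of_nonneg (show (0 : ℝ) ≤ ns + N by linarith)]
    rw [habs]
    have hε₁le : ε₁ ≤ ε / (2 * N + 2) := min_le_right _ _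
    have hε₁le1 : ε₁ ≤ 1 := min_le_left _ _
    have hns_le : ns ≤ N + 1 := by
      have : d < ε₁ := hd
      linarith
    have e3 : |ns - N| * (ns + N) ≤ ε₁ * (2 * N + 1) :=
      mul_le_mul (le_of_lt (lt_of_le_of_lt hnsN hd)) (by linarith) (by linarith) hε₁pos.le
    have e4 : ε₁ * (2 * N + 1) < ε := by
      calc ε₁ * (2 * N + 1) ≤ (ε / (2 * N + 2)) * (2 * N + 1) :=
            mul_le_mul_of_nonneg_right hε₁le (by linarith)
        _ < (ε / (2 * N + 2)) * (2 * N + 2) := by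
            apply mul_lt_mul_of_pos_left (by linarith) (by positivity)
        _ = ε := div_mul_cancel₀ _ (by linarith)
    linarith
  -- Dini-type derivative bound
  have hDini : ∀ x ∈ Set.Ico (0 : ℝ) T, ∀ r : ℝ, C' * F x < r →
      ∃ᶠ z in nhdsWithin x (Set.Ioi x), (z - x)⁻¹ * (F z - F x) < r := by
    intro x hx r hr
    have hxI : x ∈ Set.Icc (0 : ℝ) T := ⟨hx.1, hx.2.le⟩
    set r' : ℝ := (C' * F x + r) / 2 with hr'def
    have hr'1 : C' * F x < r' := by rw [hr'def]; linarith
    have hr'2 : r' < r := by rw [hr'def]; linarith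
    have hcx : ContinuousWithinAt F (Set.Icc 0 T) x := hFcont x hxI
    rw [Metric.continuousWithinAt_iff] at hcx
    obtain ⟨δ, hδpos, hδ⟩ := hcx ((r' - C' * F x) / C')
      (div_pos (by linarith) hC'pos)
    set m : ℝ := min (x + δ / 2) T with hmdef
    have hxm : x < m := lt_min (by linarith) hx.2
    have hmem : Set.Ioc x m ∈ nhdsWithin x (Set.Ioi x) :=
      Ioc_mem_nhdsGT_of_mem ⟨le_refl x, hxm⟩
    apply Filter.Eventually.frequently
    filter_upwards [hmem] with z hz
    have hzx : 0 < z - x := by linarith [hz.1]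
    have hzI : z ∈ Set.Icc (0 : ℝ) T :=
      ⟨by linarith [hx.1, hz.1], le_trans hz.2 (min_le_right _ _)⟩
    have hsub : Set.Icc x z ⊆ Set.Icc (0 : ℝ) T := fun u hu =>
      ⟨le_trans hx.1 hu.1, le_trans hu.2 hzI.2⟩
    -- for points in [x,z], C' * F u < r'
    have hnear : ∀ u ∈ Set.Icc x z, C' * F u < r' := by
      intro u hu
      have huI : u ∈ Set.Icc (0 : ℝ) T := hsub hu
      have hud : dist u x < δ := by
        rw [Real.dist_eq, abs_of_nonneg (by linarith [hu.1])]
        have : z ≤ x + δ / 2 := le_trans hz.2 (min_le_left _ _)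
        linarith [hu.2]
      have hFd := hδ huI hud
      rw [Real.dist_eq] at hFd
      have hFu : F u < F x + (r' - C' * F x) / C' := by
        have := (abs_lt.mp hFd).2
        linarith
      have := mul_lt_mul_of_pos_left hFu hC'pos
      rw [mul_add, mul_div_cancel₀ _ (ne_of_gt hC'pos)] at this
      linarith
    -- key estimate
    have hkey : F z ≤ F x + r' * (z - x) := by
      apply Summable.tsum_le_of_sum_le (hSum z hzI)
      intro S
      have hmono : MonotoneOn (fun u => r' * u - ∑ n ∈ S, w n * ‖q u n‖ ^ 2)
          (Set.Icc x z) := by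
        have hderu : ∀ u ∈ Set.Ioo x z,
            HasDerivAt (fun u => r' * u - ∑ n ∈ S, w n * ‖q u n‖ ^ 2)
              (r' - ∑ n ∈ S, e u n) u := by
          intro u hu
          have huI : u ∈ Set.Icc (0 : ℝ) T := hsub ⟨hu.1.le, hu.2.le⟩
          have hIccmem : Set.Icc (0 : ℝ) T ∈ nhds u := by
            apply Icc_mem_nhds
            · linarith [hx.1, hu.1]
            · exact lt_of_lt_of_le hu.2 hzI.2
          have h1 : HasDerivAt (fun u => ∑ n ∈ S, w n * ‖q u n‖ ^ 2)
              (∑ n ∈ S, e u n) u := (hSderiv S u huI).hasDerivAt hIccmem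
          have h2 : HasDerivAt (fun u : ℝ => r' * u) r' u := by
            simpa using (hasDerivAt_id u).const_mul r'
          exact h2.sub h1
        apply monotoneOn_of_deriv_nonneg (convex_Icc x z)
        · apply ContinuousOn.sub (continuousOn_const.mul continuousOn_id)
          intro u hu
          exact ((hSderiv S u (hsub hu)).continuousWithinAt).mono hsub
        · intro u hu
          rw [interior_Icc] at hu
          exact (hderu u hu).differentiableAt.differentiableWithinAt
        · intro u hu
          rw [interior_Icc] at hu
          rw [(hderu u hu).deriv]
          have hb := hDSbound u (hsub ⟨hu.1.le, hu.2.le⟩) S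
          have hn := hnear u ⟨hu.1.le, hu.2.le⟩
          linarith
      have hxz : x ≤ z := by linarith
      have hmq := hmono (Set.left_mem_Icc.mpr hxz) (Set.right_mem_Icc.mpr hxz) hxz
      have hSx : ∑ n ∈ S, w n * ‖q x n‖ ^ 2 ≤ F x :=
        Summable.sum_le_tsum S (fun n _ => mul_nonneg ((wt_pos n).le : (0:ℝ) ≤ w n) (sq_nonneg _))
          (hSum x hxI)
      simp only [] at hmq
      linarith [hmq, hSx]
    have hle : (z - x)⁻¹ * (F z - F x) ≤ r' := by
      rw [inv_mul_eq_div, div_le_iff₀ hzx]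
      linarith
    exact lt_of_le_of_lt hle hr'2
  -- Gronwall
  have hGron := le_gronwallBound_of_liminf_deriv_right_le (f := F)
    (f' := fun x => C' * F x) (δ := F 0) (K := C') (ε := 0) (a := 0) (b := T)
    hFcont hDini (le_refl _) (fun x _ => by simp)
  intro t ht
  have hFt := hGron t ht
  rw [sub_zero, gronwallBound_ε0] at hFt
  rw [hn21 t, hn21 0]
  have h2C : C' * t = C * t + C * t := by rw [hCdef, hC'def]; ring
  calc Real.sqrt (F t) ≤ Real.sqrt (F 0 * Real.exp (C' * t)) :=
        Real.sqrt_le_sqrt hFt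
    _ = Real.sqrt (F 0) * Real.exp (C * t) := by
        rw [h2C, Real.exp_add, Real.sqrt_mul (hFnonneg 0),
          Real.sqrt_mul_self (Real.exp_nonneg _)]
end

section
/- Let m ≥ 1 be an integer, n ∈ ℤ, let a ∈ ℓ¹(ℤ,ℂ) ∩ ℓ²(ℤ,ℂ) and b ∈ ℓ²(ℤ,ℂ). Then ∑_{k_{2m−1} < k_{2m−2} < ⋯ < k_1 < n} |a_{k_1}|·|a_{k_2}|⋯|a_{k_{2m−1}}| · |b( 1 + ∑_{j=1}^{2m−1} (−1)^{j−1} k_j )| ≤ ( ‖a‖_{ℓ¹}^{2m−2} / (2m−2)! ) · ‖a‖_{ℓ²} · ‖b‖_{ℓ²}, where the sum ranges over all strictly decreasing (2m−1)-tuples of integers k_1 > k_2 > ⋯ > k_{2m−1} with k_1 < n. -/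
open scoped BigOperators
open Function

private lemma summable_mul_of_sq {A B : ℤ → ℝ} (hA : ∀ i, 0 ≤ A i) (hB : ∀ i, 0 ≤ B i)
    (hA2 : Summable fun i => A i ^ 2) (hB2 : Summable fun i => B i ^ 2) :
    Summable fun i => A i * B i := by
  refine Summable.of_nonneg_of_le (fun i => mul_nonneg (hA i) (hB i)) (fun i => ?_)
    ((hA2.add hB2).mul_left (1/2 : ℝ))
  nlinarith [sq_nonneg (A i - B i)]

private lemma tsum_cauchy_schwarz {A B : ℤ → ℝ} (hA : ∀ i, 0 ≤ A i) (hB : ∀ i, 0 ≤ B i)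
    (hA2 : Summable fun i => A i ^ 2) (hB2 : Summable fun i => B i ^ 2) :
    ∑' i, A i * B i ≤ Real.sqrt (∑' i, A i ^ 2) * Real.sqrt (∑' i, B i ^ 2) := by
  refine Summable.tsum_le_of_sum_le (summable_mul_of_sq hA hB hA2 hB2) fun s => ?_
  have h1 : (∑ i ∈ s, A i * B i) ^ 2 ≤ (∑ i ∈ s, A i ^ 2) * ∑ i ∈ s, B i ^ 2 :=
    Finset.sum_mul_sq_le_sq_mul_sq s A B
  have h2 : ∑ i ∈ s, A i ^ 2 ≤ ∑' i, A i ^ 2 := Summable.sum_le_tsum s (fun i _ => sq_nonneg _) hA2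
  have h3 : ∑ i ∈ s, B i ^ 2 ≤ ∑' i, B i ^ 2 := Summable.sum_le_tsum s (fun i _ => sq_nonneg _) hB2
  have h0 : 0 ≤ ∑ i ∈ s, A i * B i := Finset.sum_nonneg fun i _ => mul_nonneg (hA i) (hB i)
  have h4 : (0:ℝ) ≤ ∑ i ∈ s, B i ^ 2 := Finset.sum_nonneg fun i _ => sq_nonneg _
  have h5 : (0:ℝ) ≤ ∑' i, A i ^ 2 := tsum_nonneg fun i => sq_nonneg _
  calc ∑ i ∈ s, A i * B i = Real.sqrt ((∑ i ∈ s, A i * B i) ^ 2) := (Real.sqrt_sq h0).symm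
    _ ≤ Real.sqrt ((∑' i, A i ^ 2) * ∑' i, B i ^ 2) := by
        refine Real.sqrt_le_sqrt (le_trans h1 (mul_le_mul h2 h3 h4 h5))
    _ = _ := Real.sqrt_mul h5 _

private lemma tuple_prod (A : ℤ → ℝ) (hA : ∀ i, 0 ≤ A i) (hA1 : Summable A) (N : ℕ) :
    Summable (fun k : Fin N → ℤ => ∏ j, A (k j)) ∧
      (∑' k : Fin N → ℤ, ∏ j, A (k j)) = (∑' i, A i) ^ N := by
  induction N with
  | zero =>
    refine ⟨Summable.of_finite, ?_⟩
    have : ∀ k : Fin 0 → ℤ, (∏ j, A (k j)) = 1 := fun k => by simp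
    simp only [this]
    rw [tsum_eq_single (fun i => (0:ℤ)) (fun b' hb' => absurd (Subsingleton.elim _ _) hb')]
    simp
  | succ N ih =>
    obtain ⟨ihs, iht⟩ := ih
    have hps : Summable (fun p : ℤ × (Fin N → ℤ) => A p.1 * ∏ j, A (p.2 j)) :=
      Summable.mul_of_nonneg (f := A) (g := fun k : Fin N → ℤ => ∏ j, A (k j)) hA1 ihs
        (fun i => hA i) (fun k => Finset.prod_nonneg fun j _ => hA _)
    have e := Fin.consEquiv (fun _ : Fin (N+1) => ℤ)
    have hcomp : ∀ p : ℤ × (Fin N → ℤ),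
        (∏ j, A ((Fin.consEquiv (fun _ : Fin (N+1) => ℤ)) ⟨p.1, p.2⟩ j))
          = A p.1 * ∏ j, A (p.2 j) := by
      intro p
      rw [Fin.prod_univ_succ]
      simp [Fin.consEquiv]
    constructor
    · refine (Equiv.summable_iff (Fin.consEquiv (fun _ : Fin (N+1) => ℤ))).mp ?_
      exact hps.congr fun p => (hcomp p).symm
    · rw [← Equiv.tsum_eq (Fin.consEquiv (fun _ : Fin (N+1) => ℤ)) (fun k => ∏ j, A (k j))]
      have : ∑' p : ℤ × (Fin N → ℤ),
          (∏ j, A ((Fin.consEquiv (fun _ : Fin (N+1) => ℤ)) p j))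
          = ∑' p : ℤ × (Fin N → ℤ), A p.1 * ∏ j, A (p.2 j) :=
        tsum_congr fun p => hcomp p
      rw [show (∑' p : ℤ × (Fin N → ℤ), (∏ j, A ((Fin.consEquiv (fun _ : Fin (N+1) => ℤ)) p j)))
          = ∑' p : ℤ × (Fin N → ℤ), A p.1 * ∏ j, A (p.2 j) from this]
      rw [Summable.tsum_prod' hps (fun x => ihs.mul_left (A x))]
      simp_rw [tsum_mul_left]
      rw [iht, tsum_mul_right]
      ring

private lemma strictAnti_tsum_le (A : ℤ → ℝ) (hA : ∀ i, 0 ≤ A i) (hA1 : Summable A) (N : ℕ) :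
    Summable (fun k : {k : Fin N → ℤ // StrictAnti k} => ∏ j, A (k.1 j)) ∧
    ∑' k : {k : Fin N → ℤ // StrictAnti k}, ∏ j, A (k.1 j)
      ≤ (∑' i, A i) ^ N / (N.factorial : ℝ) := by
  obtain ⟨hall, htsum⟩ := tuple_prod A hA hA1 N
  have hT : Summable (fun k : {k : Fin N → ℤ // StrictAnti k} => ∏ j, A (k.1 j)) :=
    hall.comp_injective Subtype.val_injective
  refine ⟨hT, ?_⟩
  set e : {k : Fin N → ℤ // StrictAnti k} × Equiv.Perm (Fin N) → (Fin N → ℤ) :=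
    fun p => p.1.1 ∘ p.2 with he
  have einj : Function.Injective e := by
    rintro ⟨⟨k, hk⟩, σ⟩ ⟨⟨k', hk'⟩, σ'⟩ h
    simp only [he] at h
    have hr : Set.range k = Set.range k' := by
      rw [← σ.surjective.range_comp k, ← σ'.surjective.range_comp k', h]
    have hkk' : k = k' := (StrictAnti.range_inj hk hk').mp hr
    subst hkk'
    have hσ : σ = σ' := Equiv.ext fun i => hk.injective (congrFun h i)
    simp [hσ]
  have hps : Summable (fun p : {k : Fin N → ℤ // StrictAnti k} × Equiv.Perm (Fin N) =>
      ∏ j, A (p.1.1 j)) := by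
    have h1 := Summable.mul_of_nonneg
      (f := fun k : {k : Fin N → ℤ // StrictAnti k} => ∏ j, A (k.1 j))
      (g := fun _ : Equiv.Perm (Fin N) => (1:ℝ)) hT Summable.of_finite
      (fun k => Finset.prod_nonneg fun j _ => hA _) (fun _ => zero_le_one)
    simpa using h1
  have hle : ∑' p : {k : Fin N → ℤ // StrictAnti k} × Equiv.Perm (Fin N),
      (∏ j, A (p.1.1 j)) ≤ (∑' i, A i) ^ N := by
    rw [← htsum]
    refine Summable.tsum_le_tsum_of_inj e einj (fun c _ => Finset.prod_nonneg fun j _ => hA _)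
      (fun p => le_of_eq ?_) hps hall
    exact (Equiv.prod_comp p.2 fun j => A (p.1.1 j)).symm
  have heq : ∑' p : {k : Fin N → ℤ // StrictAnti k} × Equiv.Perm (Fin N),
      (∏ j, A (p.1.1 j))
      = (N.factorial : ℝ) * ∑' k : {k : Fin N → ℤ // StrictAnti k}, ∏ j, A (k.1 j) := by
    rw [Summable.tsum_prod' hps (fun k => Summable.of_finite)]
    have : ∀ k : {k : Fin N → ℤ // StrictAnti k},
        (∑' _ : Equiv.Perm (Fin N), ∏ j, A (k.1 j)) = (N.factorial : ℝ) * ∏ j, A (k.1 j) := by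
      intro k
      rw [tsum_const, Nat.card_eq_fintype_card, Fintype.card_perm, Fintype.card_fin,
        nsmul_eq_mul]
    simp only [this]
    rw [tsum_mul_left]
  have hpos : (0:ℝ) < (N.factorial : ℝ) := by
    exact_mod_cast Nat.factorial_pos N
  rw [le_div_iff₀ hpos]
  rw [heq] at hle
  linarith

private lemma volterra_aux (M : ℕ) (hM : 0 < M) (n : ℤ) (a b : ℤ → ℂ)
    (ha1 : Summable fun i : ℤ => ‖a i‖)
    (ha2 : Summable fun i : ℤ => ‖a i‖ ^ 2)
    (hb2 : Summable fun i : ℤ => ‖b i‖ ^ 2) :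
    (∑' k : {k : Fin M → ℤ // StrictAnti k ∧ k ⟨0, hM⟩ < n},
        (∏ j : Fin M, ‖a (k.1 j)‖) *
          ‖b (1 + ∑ j : Fin M, (-1 : ℤ) ^ (j : ℕ) * k.1 j)‖) ≤
      (∑' i : ℤ, ‖a i‖) ^ (M - 1) / (Nat.factorial (M - 1)) *
        Real.sqrt (∑' i : ℤ, ‖a i‖ ^ 2) * Real.sqrt (∑' i : ℤ, ‖b i‖ ^ 2) := by
  obtain ⟨N, rfl⟩ : ∃ N, M = N + 1 := ⟨M - 1, by omega⟩
  simp only [Nat.add_sub_cancel]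
  have hCA0 : 0 ≤ Real.sqrt (∑' i : ℤ, ‖a i‖ ^ 2) := Real.sqrt_nonneg _
  have hCB0 : 0 ≤ Real.sqrt (∑' i : ℤ, ‖b i‖ ^ 2) := Real.sqrt_nonneg _
  have hεne : ((-1:ℤ)^N) ≠ 0 := pow_ne_zero _ (by norm_num)
  have hεinj : ∀ d : ℤ, Function.Injective (fun l : ℤ => d + (-1:ℤ)^N * l) := by
    intro d x y h
    simp only at h
    exact mul_left_cancel₀ hεne (by linarith)
  have hBshift : ∀ d : ℤ, Summable (fun l : ℤ => ‖b (d + (-1:ℤ)^N * l)‖ ^ 2) := fun d =>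
    hb2.comp_injective (hεinj d)
  have hABshift : ∀ d : ℤ, Summable (fun l => ‖a l‖ * ‖b (d + (-1:ℤ)^N * l)‖) := fun d =>
    summable_mul_of_sq (fun _ => norm_nonneg _) (fun _ => norm_nonneg _) ha2 (hBshift d)
  have hD : ∀ d : ℤ, (∑' l, ‖a l‖ * ‖b (d + (-1:ℤ)^N * l)‖)
      ≤ Real.sqrt (∑' i : ℤ, ‖a i‖ ^ 2) * Real.sqrt (∑' i : ℤ, ‖b i‖ ^ 2) := by
    intro d
    refine le_trans (tsum_cauchy_schwarz (fun _ => norm_nonneg _) (fun _ => norm_nonneg _)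
      ha2 (hBshift d)) ?_
    refine mul_le_mul_of_nonneg_left (Real.sqrt_le_sqrt ?_) (Real.sqrt_nonneg _)
    exact Summable.tsum_le_tsum_of_inj (fun l => d + (-1:ℤ)^N * l) (hεinj d) (fun c _ => sq_nonneg _)
      (fun l => le_rfl) (hBshift d) hb2
  have hg0 : ∀ p : {k : Fin N → ℤ // StrictAnti k} × ℤ,
      0 ≤ (∏ j, ‖a (p.1.1 j)‖) *
        (‖a p.2‖ * ‖b ((1 + ∑ j : Fin N, (-1:ℤ)^(j:ℕ) * p.1.1 j) + (-1:ℤ)^N * p.2)‖) :=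
    fun p => mul_nonneg (Finset.prod_nonneg fun j _ => norm_nonneg _)
      (mul_nonneg (norm_nonneg _) (norm_nonneg _))
  obtain ⟨hTs, hTle⟩ := strictAnti_tsum_le (fun i => ‖a i‖) (fun _ => norm_nonneg _) ha1 N
  have hfible : ∀ k' : {k : Fin N → ℤ // StrictAnti k},
      (∑' l : ℤ, (∏ j, ‖a (k'.1 j)‖) *
          (‖a l‖ * ‖b ((1 + ∑ j : Fin N, (-1:ℤ)^(j:ℕ) * k'.1 j) + (-1:ℤ)^N * l)‖))
        ≤ (∏ j, ‖a (k'.1 j)‖) *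
          (Real.sqrt (∑' i : ℤ, ‖a i‖ ^ 2) * Real.sqrt (∑' i : ℤ, ‖b i‖ ^ 2)) := by
    intro k'
    rw [tsum_mul_left]
    exact mul_le_mul_of_nonneg_left (hD _) (Finset.prod_nonneg fun j _ => norm_nonneg _)
  have hgsum : Summable (fun p : {k : Fin N → ℤ // StrictAnti k} × ℤ =>
      (∏ j, ‖a (p.1.1 j)‖) *
        (‖a p.2‖ * ‖b ((1 + ∑ j : Fin N, (-1:ℤ)^(j:ℕ) * p.1.1 j) + (-1:ℤ)^N * p.2)‖)) := by
    refine (summable_prod_of_nonneg hg0).mpr ⟨fun k' => ?_, ?_⟩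
    · dsimp only
      exact (hABshift _).mul_left _
    · refine Summable.of_nonneg_of_le (fun k' => tsum_nonneg fun l => hg0 (k', l))
        (fun k' => hfible k') (hTs.mul_right _)
  have hi1inj : Function.Injective (fun k : {k : Fin (N+1) → ℤ // StrictAnti k ∧ k ⟨0, hM⟩ < n} =>
      ((⟨Fin.init k.1, k.2.1.comp_strictMono Fin.strictMono_castSucc⟩,
        k.1 (Fin.last N)) : {k : Fin N → ℤ // StrictAnti k} × ℤ)) := by
    rintro ⟨k, hk⟩ ⟨k', hk'⟩ h
    simp only [Prod.mk.injEq, Subtype.mk.injEq] at h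
    obtain ⟨h1, h2⟩ := h
    apply Subtype.ext
    funext j
    induction j using Fin.lastCases with
    | last => exact h2
    | cast i => exact congrFun (congrArg Subtype.val h1) i
  have hfg : ∀ k : {k : Fin (N+1) → ℤ // StrictAnti k ∧ k ⟨0, hM⟩ < n},
      (∏ j : Fin (N+1), ‖a (k.1 j)‖) *
        ‖b (1 + ∑ j : Fin (N+1), (-1:ℤ)^(j:ℕ) * k.1 j)‖
      = (∏ j, ‖a (Fin.init k.1 j)‖) *
        (‖a (k.1 (Fin.last N))‖ *
          ‖b ((1 + ∑ j : Fin N, (-1:ℤ)^(j:ℕ) * Fin.init k.1 j) + (-1:ℤ)^N * k.1 (Fin.last N))‖) := by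
    intro k
    have hprod : (∏ j : Fin (N+1), ‖a (k.1 j)‖)
        = (∏ j : Fin N, ‖a (Fin.init k.1 j)‖) * ‖a (k.1 (Fin.last N))‖ := by
      rw [Fin.prod_univ_castSucc]
      rfl
    have hsum : (1 + ∑ j : Fin (N+1), (-1:ℤ)^(j:ℕ) * k.1 j)
        = (1 + ∑ j : Fin N, (-1:ℤ)^(j:ℕ) * Fin.init k.1 j) + (-1:ℤ)^N * k.1 (Fin.last N) := by
      rw [Fin.sum_univ_castSucc]
      simp only [Fin.coe_castSucc, Fin.val_last, Fin.init]
      ring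
    rw [hprod, hsum]
    ring
  have hfsum : Summable (fun k : {k : Fin (N+1) → ℤ // StrictAnti k ∧ k ⟨0, hM⟩ < n} =>
      (∏ j : Fin (N+1), ‖a (k.1 j)‖) *
        ‖b (1 + ∑ j : Fin (N+1), (-1:ℤ)^(j:ℕ) * k.1 j)‖) := by
    have h1 := hgsum.comp_injective hi1inj
    exact h1.congr fun k => (hfg k).symm
  calc (∑' k : {k : Fin (N+1) → ℤ // StrictAnti k ∧ k ⟨0, hM⟩ < n},
        (∏ j : Fin (N+1), ‖a (k.1 j)‖) *
          ‖b (1 + ∑ j : Fin (N+1), (-1:ℤ)^(j:ℕ) * k.1 j)‖)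
      ≤ ∑' p : {k : Fin N → ℤ // StrictAnti k} × ℤ,
          (∏ j, ‖a (p.1.1 j)‖) *
            (‖a p.2‖ * ‖b ((1 + ∑ j : Fin N, (-1:ℤ)^(j:ℕ) * p.1.1 j) + (-1:ℤ)^N * p.2)‖) :=
        Summable.tsum_le_tsum_of_inj _ hi1inj (fun p _ => hg0 p) (fun k => (hfg k).le) hfsum hgsum
    _ = ∑' k' : {k : Fin N → ℤ // StrictAnti k}, ∑' l : ℤ,
          (∏ j, ‖a (k'.1 j)‖) *
            (‖a l‖ * ‖b ((1 + ∑ j : Fin N, (-1:ℤ)^(j:ℕ) * k'.1 j) + (-1:ℤ)^N * l)‖) :=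
        Summable.tsum_prod' hgsum ((summable_prod_of_nonneg hg0).mp hgsum).1
    _ ≤ ∑' k' : {k : Fin N → ℤ // StrictAnti k}, (∏ j, ‖a (k'.1 j)‖) *
          (Real.sqrt (∑' i : ℤ, ‖a i‖ ^ 2) * Real.sqrt (∑' i : ℤ, ‖b i‖ ^ 2)) := by
        refine Summable.tsum_le_tsum (fun k' => hfible k') ?_ (hTs.mul_right _)
        exact ((summable_prod_of_nonneg hg0).mp hgsum).2
    _ = (∑' k' : {k : Fin N → ℤ // StrictAnti k}, ∏ j, ‖a (k'.1 j)‖) *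
          (Real.sqrt (∑' i : ℤ, ‖a i‖ ^ 2) * Real.sqrt (∑' i : ℤ, ‖b i‖ ^ 2)) := tsum_mul_right
    _ ≤ ((∑' i : ℤ, ‖a i‖) ^ N / (Nat.factorial N : ℝ)) *
          (Real.sqrt (∑' i : ℤ, ‖a i‖ ^ 2) * Real.sqrt (∑' i : ℤ, ‖b i‖ ^ 2)) :=
        mul_le_mul_of_nonneg_right hTle (mul_nonneg hCA0 hCB0)
    _ = (∑' i : ℤ, ‖a i‖) ^ N / (Nat.factorial N) *
          Real.sqrt (∑' i : ℤ, ‖a i‖ ^ 2) * Real.sqrt (∑' i : ℤ, ‖b i‖ ^ 2) := by ring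

/-- The basic multilinear estimate for the iterated Volterra summation operator:
the sum over strictly decreasing (2m−1)-tuples of integers `k_1 > ⋯ > k_{2m-1}` with
`k_1 < n` of `|a_{k_1}|⋯|a_{k_{2m-1}}| · |b(1 + ∑ (-1)^{j-1} k_j)|` is bounded by
`‖a‖₁^{2m-2}/(2m-2)! · ‖a‖₂ · ‖b‖₂`. -/
theorem volterra_multilinear_estimate
    (m : ℕ) (hm : 1 ≤ m) (n : ℤ) (a b : ℤ → ℂ)
    (ha1 : Summable fun i : ℤ => ‖a i‖)
    (ha2 : Summable fun i : ℤ => ‖a i‖ ^ 2)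
    (hb2 : Summable fun i : ℤ => ‖b i‖ ^ 2) :
    (∑' k : {k : Fin (2 * m - 1) → ℤ // StrictAnti k ∧ k ⟨0, by omega⟩ < n},
        (∏ j : Fin (2 * m - 1), ‖a (k.1 j)‖) *
          ‖b (1 + ∑ j : Fin (2 * m - 1), (-1 : ℤ) ^ (j : ℕ) * k.1 j)‖) ≤
      (∑' i : ℤ, ‖a i‖) ^ (2 * m - 2) / (Nat.factorial (2 * m - 2)) *
        Real.sqrt (∑' i : ℤ, ‖a i‖ ^ 2) * Real.sqrt (∑' i : ℤ, ‖b i‖ ^ 2) := by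
  have h2 : 2 * m - 2 = 2 * m - 1 - 1 := by omega
  rw [h2]
  exact volterra_aux (2 * m - 1) (by omega) n a b ha1 ha2 hb2
end

section
/- Let q : ℤ × ℝ → ℂ with each q_n(t) differentiable in t. For z ∈ ℂ \ {0} define the 2×2 matrices Q(n,t) = [[0, q_n(t)],[−conj(q_n(t)), 0]], A(n,z,t) = diag(z, z^{−1}) + Q(n,t), and B(n,z,t) = −i σ₃ ( ((z − z^{−1})²/2)·I − Q(n,t)·Q(n−1,t) + diag(z,z^{−1})·Q(n,t) − Q(n−1,t)·diag(z,z^{−1}) ). Then for each fixed t, the zero-curvature (compatibility) condition (d/dt) A(n,z,t) = B(n+1,z,t)·A(n,z,t) − A(n,z,t)·B(n,z,t) holds for all n ∈ ℤ and all z ∈ ℂ \ {0} if and only if q(·,t) satisfies the focusing Ablowitz–Ladik system i (d/dt) q_n(t) = q_{n+1}(t) − 2 q_n(t) + q_{n−1}(t) + |q_n(t)|²( q_{n+1}(t) + q_{n−1}(t) ) for all n ∈ ℤ. -/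
open Matrix

/-- The potential matrix `Q = [[0, w],[−conj w, 0]]`. -/
noncomputable def Qmat (w : ℂ) : Matrix (Fin 2) (Fin 2) ℂ :=
  !![0, w; -(starRingEnd ℂ) w, 0]

/-- The Lax matrix `A = diag(z, z⁻¹) + Q` built from the value `w = q_n(t)`. -/
noncomputable def Amat (w z : ℂ) : Matrix (Fin 2) (Fin 2) ℂ :=
  !![z, 0; 0, z⁻¹] + Qmat w

/-- The Lax matrix
`B = −iσ₃(((z−z⁻¹)²/2)·I − Q(n)Q(n−1) + diag(z,z⁻¹)Q(n) − Q(n−1)diag(z,z⁻¹))`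
built from `w = q_n(t)` and `w' = q_{n−1}(t)`. -/
noncomputable def Bmat (w w' z : ℂ) : Matrix (Fin 2) (Fin 2) ℂ :=
  (-Complex.I) • ((!![1, 0; 0, -1] : Matrix (Fin 2) (Fin 2) ℂ) *
    (((z - z⁻¹) ^ 2 / 2) • (1 : Matrix (Fin 2) (Fin 2) ℂ) -
      Qmat w * Qmat w' + !![z, 0; 0, z⁻¹] * Qmat w - Qmat w' * !![z, 0; 0, z⁻¹]))


lemma key_AL (a b c z : ℂ) (hz : z ≠ 0) :
    Bmat a b z * Amat b z - Amat b z * Bmat b c z =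
      Qmat (-Complex.I * (a - 2*b + c + ((starRingEnd ℂ) b * b) * (a + c))) := by
  have hw : z * z⁻¹ = 1 := mul_inv_cancel₀ hz
  ext i j
  fin_cases i <;> fin_cases j <;>
    simp only [Bmat, Amat, Qmat, Matrix.mul_apply, Fin.sum_univ_two, Matrix.smul_apply,
      Matrix.sub_apply, Matrix.add_apply, Matrix.one_apply, Matrix.of_apply,
      Matrix.cons_val', Matrix.cons_val_zero, Matrix.cons_val_one, Matrix.head_cons,
      Matrix.empty_val', Matrix.cons_val_fin_one, Matrix.head_fin_const,
      smul_eq_mul, Fin.isValue, Fin.mk_zero, Fin.mk_one, map_add, map_sub, _root_.map_mul,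
      map_neg, map_ofNat, Complex.conj_I, Complex.conj_conj,
      Fin.zero_eq_one_iff, Fin.one_eq_zero_iff,
      Ne, OfNat.ofNat_ne_one, not_false_iff, ite_true, ite_false, one_ne_zero,
      mul_zero, zero_mul, mul_one, one_mul, add_zero, zero_add, sub_zero, zero_sub]
  · ring
  · linear_combination (Complex.I * (2*b - a - c)) * hw
  · linear_combination (Complex.I * (2*(starRingEnd ℂ b) - (starRingEnd ℂ a) - (starRingEnd ℂ c))) * hw
  · ring

lemma norm_sq_eq_AL (x : ℂ) : ((‖x‖ : ℂ))^2 = (starRingEnd ℂ) x * x := by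
  rw [← Complex.normSq_eq_conj_mul_self]
  norm_cast
  rw [Complex.normSq_eq_norm_sq]

/-- The zero-curvature (compatibility) condition `(d/dt)A(n,z,t) = B(n+1)A(n) − A(n)B(n)`
holds for all `n ∈ ℤ` and `z ≠ 0` if and only if `q` satisfies the focusing
Ablowitz–Ladik system `i q'_n = q_{n+1} − 2q_n + q_{n−1} + |q_n|²(q_{n+1}+q_{n−1})`. -/
theorem ablowitz_ladik_zero_curvature
    (q : ℤ → ℝ → ℂ) (q' : ℤ → ℂ) (t : ℝ)
    (hq : ∀ n : ℤ, HasDerivAt (q n) (q' n) t) :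
    (∀ (n : ℤ) (z : ℂ), z ≠ 0 →
        Qmat (q' n) =
          Bmat (q (n + 1) t) (q n t) z * Amat (q n t) z -
            Amat (q n t) z * Bmat (q n t) (q (n - 1) t) z) ↔
      (∀ n : ℤ,
        Complex.I * q' n =
          q (n + 1) t - 2 * q n t + q (n - 1) t +
            (‖q n t‖ : ℂ) ^ 2 * (q (n + 1) t + q (n - 1) t)) := by
  constructor
  · intro h n
    have h1 := h n 1 one_ne_zero
    rw [key_AL _ _ _ _ one_ne_zero] at h1
    have h2 : q' n = -Complex.I * (q (n+1) t - 2*q n t + q (n-1) t +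
        ((starRingEnd ℂ) (q n t) * q n t) * (q (n+1) t + q (n-1) t)) := by
      have := congrFun (congrFun h1 0) 1
      simpa [Qmat] using this
    rw [h2, norm_sq_eq_AL]
    ring_nf
    simp [Complex.I_sq]
    ring
  · intro h n z hz
    rw [key_AL _ _ _ _ hz]
    have h2 : q' n = -Complex.I * (q (n+1) t - 2*q n t + q (n-1) t +
        ((starRingEnd ℂ) (q n t) * q n t) * (q (n+1) t + q (n-1) t)) := by
      have := h n
      rw [norm_sq_eq_AL] at this
      have h3 := congrArg (fun x => -Complex.I * x) this
      rw [show -Complex.I * (Complex.I * q' n) = q' n by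
        rw [← mul_assoc]; simp [Complex.I_mul_I]] at h3
      linear_combination h3
    rw [h2]
end

section
/- Let λ_1, …, λ_l ∈ ℂ be pairwise distinct and let α_1, …, α_l be positive integers with τ = α_1 + ⋯ + α_l. Consider the τ×τ generalized (confluent) Vandermonde matrix V whose rows are indexed by pairs (j, s) with 1 ≤ j ≤ l and 0 ≤ s ≤ α_j − 1 (ordered lexicographically, j first) and whose columns are indexed by i = 0, 1, …, τ−1, with entry V_{(j,s), i} = binom(i, s) · λ_j^{i−s} (equal to (1/s!) times the s-th derivative of λ^i evaluated at λ_j, with the convention binom(i,s) = 0 for s > i). Then det V = ∏_{1 ≤ k < j ≤ l} (λ_j − λ_k)^{α_j α_k}; in particular V is invertible. -/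
open scoped BigOperators


open Polynomial

lemma eval_hasseDeriv_factor (a : ℂ) (m s : ℕ) (g : Polynomial ℂ) :
    (hasseDeriv s ((X - C a) ^ m * g)).eval a
      = if m ≤ s then (taylor a g).coeff (s - m) else 0 := by
  rw [← taylor_coeff]
  have h : taylor a ((X - C a) ^ m * g) = (taylor a g) * X ^ m := by
    simp [taylor_apply, mul_comp, pow_comp, sub_comp, X_comp, C_comp, mul_comm]
  rw [h, coeff_mul_X_pow']

lemma eval_hasseDeriv_sum (x : ℂ) (s n : ℕ) (f : Polynomial ℂ) (hf : f.natDegree < n) :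
    (hasseDeriv s f).eval x
      = ∑ i ∈ Finset.range n, (Nat.choose i s : ℂ) * x ^ (i - s) * f.coeff i := by
  conv_lhs => rw [f.as_sum_range' n hf]
  rw [map_sum, eval_finset_sum]
  refine Finset.sum_congr rfl fun i _ => ?_
  rw [hasseDeriv_monomial, eval_monomial]
  ring

open scoped BigOperators


/-- Determinant of the generalized (confluent) Vandermonde matrix: with pairwise
distinct nodes `λ_1, …, λ_l`, multiplicities `α_1, …, α_l` summing to `τ`, rows
indexed lexicographically by pairs `(j,s)` with `0 ≤ s ≤ α_j − 1` and entries
`binom(i,s)·λ_j^{i−s}` in column `i`, one has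
`det V = ∏_{k<j} (λ_j − λ_k)^{α_j α_k}`; in particular `V` is invertible. -/
theorem confluent_vandermonde_det
    (l : ℕ) (lam : Fin l → ℂ) (hlam : Function.Injective lam)
    (α : Fin l → ℕ) (hα : ∀ j, 0 < α j)
    (τ : ℕ) (hτ : τ = ∑ j : Fin l, α j)
    (e : (Σ j : Fin l, Fin (α j)) ≃ Fin τ)
    -- `e` is the lexicographic enumeration of the row indices, `j` first
    (he : ∀ p : Σ j : Fin l, Fin (α j),
      ((e p : Fin τ) : ℕ) =
        (∑ k ∈ Finset.univ.filter (fun k : Fin l => k < p.1), α k) + (p.2 : ℕ))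
    (V : Matrix (Fin τ) (Fin τ) ℂ)
    (hV : ∀ (p : Σ j : Fin l, Fin (α j)) (i : Fin τ),
      V (e p) i = (Nat.choose (i : ℕ) ((p.2 : ℕ)) : ℂ) * lam p.1 ^ ((i : ℕ) - (p.2 : ℕ))) :
    V.det =
      ∏ j : Fin l, ∏ k ∈ Finset.univ.filter (fun k : Fin l => k < j),
        (lam j - lam k) ^ (α j * α k) := by
  classical
  set g : Fin l → Polynomial ℂ :=
    fun j => ∏ k ∈ Finset.univ.filter (fun k : Fin l => k < j), (X - C (lam k)) ^ (α k) with hg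
  set q : (Σ j : Fin l, Fin (α j)) → Polynomial ℂ :=
    fun p => (X - C (lam p.1)) ^ (p.2 : ℕ) * g p.1 with hq
  have hgmonic : ∀ j, (g j).Monic := fun j =>
    monic_prod_of_monic _ _ fun k _ => (monic_X_sub_C _).pow _
  have hqmonic : ∀ p, (q p).Monic := fun p =>
    ((monic_X_sub_C _).pow _).mul (hgmonic p.1)
  have hgdeg : ∀ j, (g j).natDegree
      = ∑ k ∈ Finset.univ.filter (fun k : Fin l => k < j), α k := by
    intro j
    rw [hg, natDegree_prod_of_monic _ _ fun k _ => (monic_X_sub_C _).pow _]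
    simp [natDegree_pow]
  have hqdeg : ∀ p, (q p).natDegree = ((e p : Fin τ) : ℕ) := by
    intro p
    rw [hq, Monic.natDegree_mul ((monic_X_sub_C _).pow _) (hgmonic p.1),
      natDegree_pow, natDegree_X_sub_C, hgdeg, he p]
    ring
  -- the unipotent coefficient matrix
  set A : Matrix (Fin τ) (Fin τ) ℂ := fun i i' => (q (e.symm i')).coeff i with hA
  have hAtri : A.BlockTriangular id := by
    intro i i' h
    simp only [id] at h
    apply coeff_eq_zero_of_natDegree_lt
    rw [hqdeg, Equiv.apply_symm_apply]
    exact h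
  have hAdet : A.det = 1 := by
    rw [Matrix.det_of_upperTriangular hAtri]
    apply Finset.prod_eq_one
    intro i _
    have hd : (q (e.symm i)).natDegree = (i : ℕ) := by
      rw [hqdeg, Equiv.apply_symm_apply]
    have hm := (hqmonic (e.symm i)).coeff_natDegree
    rw [hd] at hm
    simpa [hA] using hm
  set M : Matrix (Fin τ) (Fin τ) ℂ := V * A with hMdef
  have hM : ∀ p p', M (e p) (e p')
      = (hasseDeriv (p.2 : ℕ) (q p')).eval (lam p.1) := by
    intro p p'
    rw [eval_hasseDeriv_sum _ _ τ _ (by rw [hqdeg]; exact (e p' : Fin τ).isLt)]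
    rw [hMdef, Matrix.mul_apply, ← Fin.sum_univ_eq_sum_range]
    refine Finset.sum_congr rfl fun i _ => ?_
    rw [hV]
    simp only [hA, Equiv.symm_apply_apply]
  -- lexicographic order on row indices
  have hofflt : ∀ {a b : Fin l}, a < b →
      (∑ k ∈ Finset.univ.filter (fun k : Fin l => k < a), α k) + α a
        ≤ ∑ k ∈ Finset.univ.filter (fun k : Fin l => k < b), α k := by
    intro a b hab
    have hsub : insert a (Finset.univ.filter (fun k : Fin l => k < a))
        ⊆ Finset.univ.filter (fun k : Fin l => k < b) := by
      intro k hk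
      simp only [Finset.mem_insert, Finset.mem_filter, Finset.mem_univ, true_and] at *
      rcases hk with rfl | hk
      · exact hab
      · exact lt_trans hk hab
    calc (∑ k ∈ Finset.univ.filter (fun k : Fin l => k < a), α k) + α a
        = ∑ k ∈ insert a (Finset.univ.filter (fun k : Fin l => k < a)), α k := by
          rw [Finset.sum_insert (by simp), add_comm]
      _ ≤ _ := Finset.sum_le_sum_of_subset hsub
  have hlex : ∀ p p' : Σ j : Fin l, Fin (α j),
      ((e p : Fin τ) : ℕ) < ((e p' : Fin τ) : ℕ) →
      p.1 < p'.1 ∨ (p.1 = p'.1 ∧ (p.2 : ℕ) < (p'.2 : ℕ)) := by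
    rintro ⟨j, s⟩ ⟨j', s'⟩ h
    rcases lt_trichotomy j j' with h1 | h1 | h1
    · exact Or.inl h1
    · subst h1
      refine Or.inr ⟨rfl, ?_⟩
      show (s : ℕ) < (s' : ℕ)
      have hs : ((e ⟨j, s⟩ : Fin τ) : ℕ)
          = (∑ k ∈ Finset.univ.filter (fun k : Fin l => k < j), α k) + (s : ℕ) := he ⟨j, s⟩
      have hs' : ((e ⟨j, s'⟩ : Fin τ) : ℕ)
          = (∑ k ∈ Finset.univ.filter (fun k : Fin l => k < j), α k) + (s' : ℕ) := he ⟨j, s'⟩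
      omega
    · exfalso
      have h2 := hofflt h1
      have h3 : (s' : ℕ) < α j' := s'.isLt
      have hs : ((e ⟨j, s⟩ : Fin τ) : ℕ)
          = (∑ k ∈ Finset.univ.filter (fun k : Fin l => k < j), α k) + (s : ℕ) := he ⟨j, s⟩
      have hs' : ((e ⟨j', s'⟩ : Fin τ) : ℕ)
          = (∑ k ∈ Finset.univ.filter (fun k : Fin l => k < j'), α k) + (s' : ℕ) := he ⟨j', s'⟩
      omega
  -- M is lower triangular
  have hMtri : M.BlockTriangular OrderDual.toDual := by
    intro i i' h
    have hii : i < i' := h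
    obtain ⟨p, rfl⟩ := e.surjective i
    obtain ⟨p', rfl⟩ := e.surjective i'
    rw [hM]
    rcases hlex p p' hii with h1 | ⟨h1, h2⟩
    · -- p.1 < p'.1 : factor out (X - C (lam p.1)) ^ (α p.1)
      have hmem : p.1 ∈ Finset.univ.filter (fun k : Fin l => k < p'.1) := by
        simp [h1]
      have hfac : q p' = (X - C (lam p.1)) ^ (α p.1) *
          ((X - C (lam p'.1)) ^ ((p'.2 : ℕ)) *
            ∏ k ∈ (Finset.univ.filter (fun k : Fin l => k < p'.1)).erase p.1,
              (X - C (lam k)) ^ (α k)) := by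
        simp only [hq, hg]
        rw [← Finset.mul_prod_erase _ _ hmem]
        ring
      rw [hfac, eval_hasseDeriv_factor, if_neg (Nat.not_le.mpr p.2.isLt)]
    · -- same node, lower Hasse order
      have hfac : q p' = (X - C (lam p.1)) ^ ((p'.2 : ℕ)) * g p'.1 := by
        simp only [hq]
        rw [h1]
      rw [hfac, eval_hasseDeriv_factor, if_neg (Nat.not_le.mpr h2)]
  have hMdiag : ∀ p : Σ j : Fin l, Fin (α j),
      M (e p) (e p) = (g p.1).eval (lam p.1) := by
    intro p
    rw [hM, hq, eval_hasseDeriv_factor, if_pos le_rfl, Nat.sub_self, taylor_coeff_zero]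
  -- conclude
  have hdet : V.det = M.det := by rw [hMdef, Matrix.det_mul, hAdet, mul_one]
  rw [hdet, Matrix.det_of_lowerTriangular M hMtri]
  rw [← Equiv.prod_comp e (fun i => M i i)]
  have hdiag : ∀ p : Σ j : Fin l, Fin (α j), M (e p) (e p) =
      ∏ k ∈ Finset.univ.filter (fun k : Fin l => k < p.1), (lam p.1 - lam k) ^ (α k) := by
    intro p
    rw [hMdiag, hg, eval_prod]
    simp [eval_pow]
  rw [Finset.prod_congr rfl fun p _ => hdiag p]
  rw [← Finset.univ_sigma_univ, Finset.prod_sigma]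
  refine Finset.prod_congr rfl fun j _ => ?_
  show (∏ _s : Fin (α j), ∏ k ∈ Finset.univ.filter (fun k : Fin l => k < j),
      (lam j - lam k) ^ α k) = _
  rw [Finset.prod_const, Finset.card_univ, Fintype.card_fin, ← Finset.prod_pow]
  refine Finset.prod_congr rfl fun k _ => ?_
  rw [← pow_mul, Nat.mul_comm]
end

section
/- Let V : [0, 2π] → M₂(ℂ) be continuous and suppose that for every θ ∈ [0, 2π] the Hermitian part Re V(θ) := (V(θ) + V(θ)†)/2 is positive definite. Let A : [0, 2π] → M₂(ℂ) be measurable with ∫_0^{2π} ‖A(θ)‖² dθ < ∞. If ∫_0^{2π} A(θ) · V(θ) · A(θ)† dθ = 0 (as a 2×2 matrix), then A(θ) = 0 for almost every θ ∈ [0, 2π]. -/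
open Matrix MeasureTheory
open scoped ComplexOrder

private lemma conj_memLp' {μ : Measure ℝ} {f : ℝ → ℂ} (hf : MemLp f 2 μ) :
    MemLp (fun x => (starRingEnd ℂ) (f x)) 2 μ := by
  refine MemLp.of_le hf ((continuous_star.comp_aestronglyMeasurable hf.1).congr
    (Filter.Eventually.of_forall fun x => rfl)) ?_
  exact Filter.Eventually.of_forall fun x => by simp

private lemma conj_integrable' {μ : Measure ℝ} {f : ℝ → ℂ} (hf : Integrable f μ) :
    Integrable (fun x => (starRingEnd ℂ) (f x)) μ := by
  refine ⟨(continuous_star.comp_aestronglyMeasurable hf.1).congr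
    (Filter.Eventually.of_forall fun x => rfl), ?_⟩
  rw [hasFiniteIntegral_iff_norm]
  simpa [hasFiniteIntegral_iff_norm] using hf.2

private lemma l2_mul_integrable' {μ : Measure ℝ} {f g : ℝ → ℂ} (hf : MemLp f 2 μ)
    (hg : MemLp g 2 μ) : Integrable (fun x => f x * g x) μ := by
  have := hg.smul (φ := f) hf (p := 2) (q := 2) (r := 1)
    (hpqr := ⟨by rw [inv_one]; exact ENNReal.inv_two_add_inv_two⟩)
  rw [memLp_one_iff_integrable] at this
  exact this

private lemma quad_diag' (B M : Matrix (Fin 2) (Fin 2) ℂ) (i : Fin 2) :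
    (B * M * Bᴴ) i i = star (star (B i)) ⬝ᵥ M *ᵥ (star (B i)) := by
  simp only [mul_apply, conjTranspose_apply, dotProduct, mulVec, star_star, Pi.star_apply,
    Finset.sum_mul, Finset.mul_sum, mul_assoc]
  rw [Finset.sum_comm]

/-- Positivity (vanishing) argument: if `V : [0,2π] → M₂(ℂ)` is continuous with
positive definite Hermitian part `Re V = (V + V†)/2` everywhere, `A` is square
integrable on `[0,2π]`, and `∫ A V A† dθ = 0`, then `A = 0` almost everywhere. -/
theorem vanishing_from_positive_definite_quadratic_form
    (V A : ℝ → Matrix (Fin 2) (Fin 2) ℂ)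
    (hVcont : ContinuousOn V (Set.Icc 0 (2 * Real.pi)))
    (hVpos : ∀ θ ∈ Set.Icc (0 : ℝ) (2 * Real.pi),
      Matrix.PosDef ((1 / 2 : ℂ) • (V θ + (V θ)ᴴ)))
    (hA : ∀ i j : Fin 2,
      MeasureTheory.MemLp (fun θ : ℝ => A θ i j) 2
        (MeasureTheory.volume.restrict (Set.Icc (0 : ℝ) (2 * Real.pi))))
    (hzero : ∀ i j : Fin 2,
      (∫ θ in Set.Icc (0 : ℝ) (2 * Real.pi), (A θ * V θ * (A θ)ᴴ) i j) = 0) :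
    ∀ᵐ θ ∂(MeasureTheory.volume.restrict (Set.Icc (0 : ℝ) (2 * Real.pi))),
      A θ = 0 := by
  set S : Set ℝ := Set.Icc (0 : ℝ) (2 * Real.pi) with hSdef
  set μ : Measure ℝ := volume.restrict S with hμdef
  set H : ℝ → Matrix (Fin 2) (Fin 2) ℂ := fun θ => (1 / 2 : ℂ) • (V θ + (V θ)ᴴ) with hHdef
  -- continuity / measurability / boundedness of entries of V
  have hVe : ∀ j k : Fin 2, ContinuousOn (fun θ => V θ j k) S := fun j k =>
    (continuous_apply k).comp_continuousOn ((continuous_apply j).comp_continuousOn hVcont)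
  have hVm : ∀ j k : Fin 2, AEStronglyMeasurable (fun θ => V θ j k) μ := fun j k =>
    (hVe j k).aestronglyMeasurable measurableSet_Icc
  have hVb : ∀ j k : Fin 2, ∃ C : ℝ, ∀ᵐ θ ∂μ, ‖V θ j k‖ ≤ C := by
    intro j k
    obtain ⟨C, hC⟩ := isCompact_Icc.exists_bound_of_continuousOn (hVe j k)
    exact ⟨C, (ae_restrict_mem measurableSet_Icc).mono fun θ hθ => hC θ hθ⟩
  -- entries of H
  have hHentry : ∀ (θ : ℝ) (k l : Fin 2),
      H θ k l = (1 / 2 : ℂ) * (V θ k l + star (V θ l k)) := by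
    intro θ k l
    simp only [hHdef, Matrix.smul_apply, Matrix.add_apply, Matrix.conjTranspose_apply,
      smul_eq_mul]
  have hHm : ∀ k l : Fin 2, AEStronglyMeasurable (fun θ => H θ k l) μ := by
    intro k l
    have : (fun θ => H θ k l)
        = fun θ => (1 / 2 : ℂ) * (V θ k l + star (V θ l k)) :=
      funext fun θ => hHentry θ k l
    rw [this]
    exact ((hVm k l).add (continuous_star.comp_aestronglyMeasurable (hVm l k))).const_mul _
  have hHb : ∀ k l : Fin 2, ∃ C : ℝ, ∀ᵐ θ ∂μ, ‖H θ k l‖ ≤ C := by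
    intro k l
    obtain ⟨C1, hC1⟩ := hVb k l
    obtain ⟨C2, hC2⟩ := hVb l k
    refine ⟨‖(1 / 2 : ℂ)‖ * (C1 + C2), ?_⟩
    filter_upwards [hC1, hC2] with θ h1 h2
    rw [hHentry θ k l, norm_mul]
    refine mul_le_mul_of_nonneg_left ?_ (norm_nonneg _)
    exact (norm_add_le _ _).trans (add_le_add h1 (by simpa using h2))
  -- products of entries of A are integrable
  have hprod : ∀ i k j l : Fin 2,
      Integrable (fun θ => A θ i k * (starRingEnd ℂ) (A θ j l)) μ := fun i k j l =>
    l2_mul_integrable' (hA i k) (conj_memLp' (hA j l))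
  -- generic integrability of entries of A M Aᴴ
  have hMint : ∀ (M : ℝ → Matrix (Fin 2) (Fin 2) ℂ),
      (∀ k l : Fin 2, AEStronglyMeasurable (fun θ => M θ k l) μ) →
      (∀ k l : Fin 2, ∃ C : ℝ, ∀ᵐ θ ∂μ, ‖M θ k l‖ ≤ C) →
      ∀ i j : Fin 2, Integrable (fun θ => (A θ * M θ * (A θ)ᴴ) i j) μ := by
    intro M hMm hMb i j
    have heq : (fun θ => (A θ * M θ * (A θ)ᴴ) i j)
        = fun θ => ∑ l : Fin 2, ∑ k : Fin 2,
            M θ k l * (A θ i k * (starRingEnd ℂ) (A θ j l)) := by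
      funext θ
      simp only [mul_apply, conjTranspose_apply, Finset.sum_mul]
      exact Finset.sum_congr rfl fun l _ => Finset.sum_congr rfl fun k _ => by
        simp only [starRingEnd_apply]; ring
    rw [heq]
    refine integrable_finset_sum _ fun l _ => integrable_finset_sum _ fun k _ => ?_
    obtain ⟨C, hC⟩ := hMb k l
    exact (hprod i k j l).bdd_mul (hMm k l) hC
  have hVint : ∀ i j : Fin 2, Integrable (fun θ => (A θ * V θ * (A θ)ᴴ) i j) μ :=
    hMint V hVm hVb
  have hHint : ∀ i j : Fin 2, Integrable (fun θ => (A θ * H θ * (A θ)ᴴ) i j) μ :=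
    hMint H hHm hHb
  -- diagonal of A H Aᴴ in terms of A V Aᴴ
  have hAH : ∀ (θ : ℝ) (i : Fin 2), (A θ * H θ * (A θ)ᴴ) i i
      = (1 / 2 : ℂ) * ((A θ * V θ * (A θ)ᴴ) i i
          + (starRingEnd ℂ) ((A θ * V θ * (A θ)ᴴ) i i)) := by
    intro θ i
    have h1 : A θ * H θ * (A θ)ᴴ
        = (1 / 2 : ℂ) • (A θ * V θ * (A θ)ᴴ + A θ * (V θ)ᴴ * (A θ)ᴴ) := by
      rw [hHdef]
      rw [Matrix.mul_smul, Matrix.smul_mul, Matrix.mul_add, Matrix.add_mul]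
    have h2 : (A θ * (V θ)ᴴ * (A θ)ᴴ) i i
        = (starRingEnd ℂ) ((A θ * V θ * (A θ)ᴴ) i i) := by
      have h3 : A θ * (V θ)ᴴ * (A θ)ᴴ = (A θ * V θ * (A θ)ᴴ)ᴴ := by
        simp [conjTranspose_mul, Matrix.mul_assoc]
      rw [h3, conjTranspose_apply, starRingEnd_apply]
    rw [h1]
    simp [Matrix.smul_apply, smul_eq_mul, Matrix.add_apply, h2]
  -- the nonnegative scalar function
  set g : ℝ → ℂ := fun θ => ∑ i : Fin 2, (A θ * H θ * (A θ)ᴴ) i i with hgdef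
  have hg_int : Integrable g μ := integrable_finset_sum _ fun i _ => hHint i i
  -- its integral vanishes
  have hg_zero : (∫ θ, g θ ∂μ) = 0 := by
    rw [hgdef]
    rw [integral_finset_sum _ fun i _ => hHint i i]
    refine Finset.sum_eq_zero fun i _ => ?_
    have : (fun θ => (A θ * H θ * (A θ)ᴴ) i i)
        = fun θ => (1 / 2 : ℂ) • ((A θ * V θ * (A θ)ᴴ) i i
            + (starRingEnd ℂ) ((A θ * V θ * (A θ)ᴴ) i i)) := by
      funext θ; rw [hAH θ i, smul_eq_mul]
    rw [this, integral_smul, integral_add (hVint i i) (conj_integrable' (hVint i i)),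
      integral_conj]
    have h0 : (∫ θ, (A θ * V θ * (A θ)ᴴ) i i ∂μ) = 0 := hzero i i
    rw [h0]
    simp
  -- pointwise nonnegativity on S
  have hg_nonneg : ∀ θ ∈ S, ∀ i : Fin 2, (0 : ℂ) ≤ (A θ * H θ * (A θ)ᴴ) i i := by
    intro θ hθ i
    rw [quad_diag']
    exact (posSemidef_iff_dotProduct_mulVec.mp (hVpos θ hθ).posSemidef).2 (star (A θ i))
  have hf_nonneg : ∀ᵐ θ ∂μ, 0 ≤ (g θ).re := by
    filter_upwards [ae_restrict_mem measurableSet_Icc] with θ hθ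
    have : (0 : ℂ) ≤ g θ := Finset.sum_nonneg fun i _ => hg_nonneg θ hθ i
    exact (Complex.le_def.mp this).1
  have hf_int : Integrable (fun θ => (g θ).re) μ := hg_int.re
  have hf_zero : (∫ θ, (g θ).re ∂μ) = 0 := by
    rw [← RCLike.re_eq_complex_re]
    rw [show (fun θ => RCLike.re (g θ)) = fun θ => RCLike.re (g θ) from rfl]
    rw [integral_re hg_int, hg_zero]
    simp
  have hf_ae : (fun θ => (g θ).re) =ᵐ[μ] 0 :=
    (integral_eq_zero_iff_of_nonneg_ae hf_nonneg hf_int).mp hf_zero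
  -- conclusion
  filter_upwards [ae_restrict_mem measurableSet_Icc, hf_ae] with θ hθ hfθ
  have hgθ : g θ = 0 := by
    have him : (g θ).im = 0 := by
      have : (0 : ℂ) ≤ g θ := Finset.sum_nonneg fun i _ => hg_nonneg θ hθ i
      exact ((Complex.le_def.mp this).2).symm
    exact Complex.ext (by simpa using hfθ) him
  -- each diagonal term is zero
  have hterm : ∀ i : Fin 2, (A θ * H θ * (A θ)ᴴ) i i = 0 := by
    have hsum : (∑ i : Fin 2, (A θ * H θ * (A θ)ᴴ) i i) = 0 := hgθ
    intro i
    have := (Finset.sum_eq_zero_iff_of_nonneg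
      (fun i _ => hg_nonneg θ hθ i)).mp hsum i (Finset.mem_univ i)
    exact this
  ext i j
  by_contra hij
  have hx : star (A θ i) ≠ 0 := by
    intro h
    apply hij
    have := congrFun h j
    simpa using congrArg star this
  have hpos := (posDef_iff_dotProduct_mulVec.mp (hVpos θ hθ)).2 hx
  rw [star_star] at hpos
  have : (0 : ℂ) < (A θ * H θ * (A θ)ᴴ) i i := by
    rw [quad_diag', star_star]
    exact hpos
  rw [hterm i] at this
  exact lt_irrefl _ this
end
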